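/- arXiv:2203.05350 — 6 statements merged into one kernel-verified Lean document; each statement's English description precedes it below -/
import Mathlib

section
/- For every n ≥ 0 the orthonormal polynomials P_n satisfy the explicit formula (−1)^n k^n P_n(x) = 1 + Σ_{m=1}^{n} (−1)^m [ Σ_{0≤j₁<j₂<…<j_m≤n−1} (1−k^{2(j₁+1)})(1−k^{2(j₂−j₁)})⋯(1−k^{2(j_m−j_{m−1})}) / ((1−k²)^m a_{j₁}a_{j₂}⋯a_{j_m}) ] x^m, as an identity of polynomials in x. -/
/-
Writing `Q n = (-1)^n k^n P n`, the three-term recurrence becomes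
`a_n Q_{n+1} = (a_n + k² a_{n-1} - x) Q_n - k² a_{n-1} Q_{n-1}` with `Q_0 = 1`, `Q_1 = 1 - x / a_0`,
so it suffices that the right-hand polynomials obey the same recurrence, i.e. that their
coefficients `c_n^m` (sums over chains `j₁ < ⋯ < j_m < n`) do. Splitting the chains below `n + 1`
according to whether `j_m = n` gives `c_{n+1}^{m+1} = c_n^{m+1} + L_n^m`, where `L_n^m` sums over the
chains ending in `n`. Appending a top element `N` to a chain multiplies its weight by
`(1 + k² + ⋯ + k^{2(g-1)}) / a_N`, `g` the new gap, and the geometric-sum identity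
`1 + k² (1 + ⋯ + k^{2(g-1)}) = 1 + ⋯ + k^{2g}` turns this into
`a_{n+1} L_{n+1}^m = c_{n+1}^m + k² a_n L_n^m`; together these give the coefficient recurrence.
-/

open scoped BigOperators

noncomputable def alph (a : ℕ → ℝ) (k : ℝ) (n : ℕ) : ℝ := k * a n

noncomputable def bet (a : ℕ → ℝ) (k : ℝ) : ℕ → ℝ
  | 0 => a 0
  | n + 1 => a (n + 1) + k ^ 2 * a n

noncomputable def gapPow (k : ℝ) (m : ℕ) (j : Fin m → ℕ) : ℝ :=
  ∏ i : Fin m,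
    (1 - k ^ (2 * (j i + 1 -
      (if (i : ℕ) = 0 then 0
       else j ⟨(i : ℕ) - 1, Nat.lt_of_le_of_lt (Nat.sub_le _ _) i.isLt⟩ + 1))))

noncomputable def cC (a : ℕ → ℝ) (k : ℝ) (m : ℕ) : ℝ :=
  ∑' j : {j : Fin m → ℕ // StrictMono j},
    gapPow k m j.1 / ((1 - k ^ 2) ^ m * ∏ i : Fin m, a (j.1 i))

noncomputable def Fgt (a : ℕ → ℝ) (k : ℝ) (z : ℂ) : ℂ :=
  1 + ∑' m : ℕ, (-1 : ℂ) ^ (m + 1) * (cC a k (m + 1) : ℂ) * z ^ (m + 1)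

noncomputable def dC (a : ℕ → ℝ) (k : ℝ) (n m : ℕ) : ℝ :=
  ∑' j : {j : Fin (m + 1) → ℕ // StrictMono j ∧ n ≤ j 0},
    (k ^ (2 * j.1 0) *
      ∏ i : Fin m, (1 - k ^ (2 * (j.1 i.succ - j.1 i.castSucc)))) /
      ((1 - k ^ 2) ^ m * ∏ i : Fin (m + 1), a (j.1 i))

noncomputable def Wgt (a : ℕ → ℝ) (k : ℝ) (n : ℕ) (z : ℂ) : ℂ :=
  ∑' m : ℕ, (-1 : ℂ) ^ m * (dC a k n m : ℂ) * z ^ m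

noncomputable def Phi (a : ℕ → ℝ) (k : ℝ) (n : ℕ) (z : ℂ) : ℂ :=
  (-1 : ℂ) ^ n * ((k : ℂ) ^ n)⁻¹ * Wgt a k n z

open Finset

theorem Fin.strictMono_snoc_iff {α : Type*} [Preorder α] {m : ℕ} {v : Fin m → α} {x : α} :
    StrictMono (Fin.snoc v x : Fin (m + 1) → α) ↔ StrictMono v ∧ ∀ i, v i < x := by
  refine ⟨fun h => ⟨fun i j hij => ?_, fun i => ?_⟩, fun ⟨hv, hx⟩ i j hij => ?_⟩
  · simpa using h (Fin.castSucc_lt_castSucc_iff.2 hij)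
  · simpa using h (Fin.castSucc_lt_last i)
  · cases j using Fin.lastCases with
    | last =>
      cases i using Fin.lastCases with
      | last => exact absurd hij (lt_irrefl _)
      | cast i => simpa using hx i
    | cast j =>
      cases i using Fin.lastCases with
      | last => exact absurd hij (not_lt.2 (Fin.le_last _))
      | cast i => simpa using hv (Fin.castSucc_lt_castSucc_iff.1 hij)

open scoped Classical in
noncomputable def strictSeqs (m n : ℕ) : Finset (Fin m → ℕ) :=
  (Fintype.piFinset fun _ => range n).filter StrictMono

theorem mem_strictSeqs {m n : ℕ} {v : Fin m → ℕ} :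
    v ∈ strictSeqs m n ↔ StrictMono v ∧ ∀ i, v i < n := by
  simp [strictSeqs, and_comm]

theorem snoc_mem_strictSeqs {m n N : ℕ} {v : Fin m → ℕ} :
    (Fin.snoc v N : Fin (m + 1) → ℕ) ∈ strictSeqs (m + 1) n ↔ v ∈ strictSeqs m N ∧ N < n := by
  simp only [mem_strictSeqs, Fin.strictMono_snoc_iff, Fin.forall_fin_succ', Fin.snoc_castSucc,
    Fin.snoc_last]
  exact ⟨fun ⟨h, _, hN⟩ => ⟨h, hN⟩, fun ⟨⟨hv, hvN⟩, hN⟩ => ⟨⟨hv, hvN⟩, fun i => (hvN i).trans hN, hN⟩⟩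

theorem strictSeqs_eq_empty {m n : ℕ} (h : n < m) : strictSeqs m n = ∅ := by
  refine eq_empty_of_forall_notMem fun v hv => ?_
  obtain ⟨hmono, hlt⟩ := mem_strictSeqs.1 hv
  have := card_le_card_of_injOn (s := univ) v (fun i _ => mem_range.2 (hlt i)) hmono.injective.injOn
  simp at this
  omega

theorem strictSeqs_zero (n : ℕ) : strictSeqs 0 n = {Fin.elim0} := by
  ext v
  simp [mem_strictSeqs, Subsingleton.elim v Fin.elim0, Subsingleton.strictMono]

theorem sum_filter_strictMono_eq_sum_strictSeqs {M : Type*} [AddCommMonoid M] {m n : ℕ}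
    (f : (Fin m → ℕ) → M) :
    ∑ j ∈ univ.filter (fun j : Fin m → Fin n => ∀ i₁ i₂ : Fin m, i₁ < i₂ → j i₁ < j i₂),
      f (fun i => (j i : ℕ)) = ∑ v ∈ strictSeqs m n, f v := by
  rw [← sum_image (g := fun (j : Fin m → Fin n) i => (j i : ℕ))
    fun j _ j' _ h => funext fun i => Fin.ext (congrFun h i)]
  congr 1
  ext v
  simp only [mem_image, mem_filter, mem_univ, true_and, mem_strictSeqs]
  constructor
  · rintro ⟨j, hj, rfl⟩
    exact ⟨fun i₁ i₂ h => hj i₁ i₂ h, fun i => (j i).isLt⟩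
  · rintro ⟨hv, hlt⟩
    exact ⟨fun i => ⟨v i, hlt i⟩, fun i₁ i₂ h => hv h, rfl⟩

theorem strictSeqs_succ_succ (m n : ℕ) :
    strictSeqs (m + 1) (n + 1) =
      strictSeqs (m + 1) n ∪ (strictSeqs m n).image fun v => (Fin.snoc v n : Fin (m + 1) → ℕ) := by
  ext w
  obtain ⟨v, N, rfl⟩ : ∃ (v : Fin m → ℕ) (N : ℕ), Fin.snoc v N = w :=
    ⟨Fin.init w, w (Fin.last m), Fin.snoc_init_self w⟩
  simp only [mem_union, mem_image, snoc_mem_strictSeqs, Fin.snoc_inj]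
  constructor
  · rintro ⟨hv, hN⟩
    rcases Nat.lt_succ_iff_lt_or_eq.1 hN with hN | rfl
    · exact .inl ⟨hv, hN⟩
    · exact .inr ⟨v, hv, rfl, rfl⟩
  · rintro (⟨hv, hN⟩ | ⟨_, hv, rfl, rfl⟩)
    · exact ⟨hv, hN.trans (Nat.lt_succ_self n)⟩
    · exact ⟨hv, Nat.lt_succ_self _⟩

theorem sum_strictSeqs_succ_succ {M : Type*} [AddCommMonoid M] (m n : ℕ)
    (f : (Fin (m + 1) → ℕ) → M) :
    ∑ w ∈ strictSeqs (m + 1) (n + 1), f w =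
      ∑ w ∈ strictSeqs (m + 1) n, f w + ∑ v ∈ strictSeqs m n, f (Fin.snoc v n) := by
  rw [strictSeqs_succ_succ, sum_union, sum_image fun v _ v' _ h => (Fin.snoc_injective2 h).1]
  refine disjoint_left.2 fun w hw hw' => ?_
  obtain ⟨v, -, rfl⟩ := mem_image.1 hw'
  exact lt_irrefl n (snoc_mem_strictSeqs.1 hw).2

/-- The offset against which `gapPow` measures the next gap; `0` for the empty sequence
encodes the convention `j_{-1} = -1`. -/
def lastSucc : {m : ℕ} → (Fin m → ℕ) → ℕ
  | 0, _ => 0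
  | m + 1, v => v (Fin.last m) + 1

theorem lastSucc_le {m n : ℕ} {v : Fin m → ℕ} (hv : v ∈ strictSeqs m n) : lastSucc v ≤ n := by
  cases m with
  | zero => exact Nat.zero_le n
  | succ m => exact (mem_strictSeqs.1 hv).2 (Fin.last m)

theorem sum_strictSeqs_succ_of_lastSucc {M : Type*} [AddCommMonoid M] {m n : ℕ}
    (f : (Fin m → ℕ) → M) (hf : ∀ v ∈ strictSeqs m (n + 1), lastSucc v = n + 1 → f v = 0) :
    ∑ v ∈ strictSeqs m (n + 1), f v = ∑ v ∈ strictSeqs m n, f v := by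
  refine (sum_subset (fun v hv => ?_) fun v hv hv' => hf v hv ?_).symm
  · obtain ⟨hmono, hlt⟩ := mem_strictSeqs.1 hv
    exact mem_strictSeqs.2 ⟨hmono, fun i => (hlt i).trans (Nat.lt_succ_self n)⟩
  · obtain ⟨hmono, hlt⟩ := mem_strictSeqs.1 hv
    obtain ⟨i, hi⟩ : ∃ i, n ≤ v i := by simpa [mem_strictSeqs, hmono] using hv'
    cases m with
    | zero => exact i.elim0
    | succ m =>
      have := hmono.monotone (Fin.le_last i)
      have := hlt (Fin.last m)
      simp only [lastSucc]
      omega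

theorem gapPow_snoc (k : ℝ) {m : ℕ} (v : Fin m → ℕ) (N : ℕ) :
    gapPow k (m + 1) (Fin.snoc v N) = gapPow k m v * (1 - k ^ (2 * (N + 1 - lastSucc v))) := by
  rw [gapPow, Fin.prod_univ_castSucc, Fin.snoc_last]
  congr 1
  · refine prod_congr rfl fun i _ => ?_
    by_cases hi : (i : ℕ) = 0
    · simp [hi]
    · simp only [Fin.val_castSucc, hi, if_false, Fin.snoc_castSucc]
      rw [show (⟨(i : ℕ) - 1, _⟩ : Fin (m + 1)) = Fin.castSucc ⟨(i : ℕ) - 1, by omega⟩ from rfl,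
        Fin.snoc_castSucc]
  · cases m with
    | zero => simp [lastSucc]
    | succ m =>
      simp only [Fin.val_last, Nat.add_one_ne_zero, if_false, lastSucc]
      rw [show (⟨m + 1 - 1, _⟩ : Fin (m + 2)) = (Fin.last m).castSucc from Fin.ext (by simp),
        Fin.snoc_castSucc]

section Weights

variable (a : ℕ → ℝ) (k : ℝ)

noncomputable def chainWeight {m : ℕ} (v : Fin m → ℕ) : ℝ :=
  gapPow k m v / ((1 - k ^ 2) ^ m * ∏ i, a (v i))

noncomputable def chainCoeff (n m : ℕ) : ℝ :=
  ∑ v ∈ strictSeqs m n, chainWeight a k v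

noncomputable def lastChainCoeff (n m : ℕ) : ℝ :=
  ∑ v ∈ strictSeqs m n, chainWeight a k (Fin.snoc v n : Fin (m + 1) → ℕ)

theorem chainCoeff_zero (n : ℕ) : chainCoeff a k n 0 = 1 := by
  simp [chainCoeff, strictSeqs_zero, chainWeight, gapPow]

theorem chainCoeff_eq_zero_of_lt {n m : ℕ} (h : n < m) : chainCoeff a k n m = 0 := by
  simp [chainCoeff, strictSeqs_eq_empty h]

theorem chainCoeff_succ_succ (n m : ℕ) :
    chainCoeff a k (n + 1) (m + 1) = chainCoeff a k n (m + 1) + lastChainCoeff a k n m :=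
  sum_strictSeqs_succ_succ m n _

variable {a k}

theorem mul_chainWeight_snoc (hk : k ^ 2 ≠ 1) (ha : ∀ i, a i ≠ 0) {m : ℕ}
    (v : Fin m → ℕ) (N : ℕ) :
    a N * chainWeight a k (Fin.snoc v N : Fin (m + 1) → ℕ) =
      chainWeight a k v * ∑ i ∈ range (N + 1 - lastSucc v), (k ^ 2) ^ i := by
  have hk₁ : 1 - k ^ 2 ≠ 0 := sub_ne_zero.2 hk.symm
  have hk₂ : k ^ 2 - 1 ≠ 0 := sub_ne_zero.2 hk
  have hprod : ∏ i, a (v i) ≠ 0 := prod_ne_zero_iff.2 fun i _ => ha (v i)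
  rw [geom_sum_eq hk, ← pow_mul]
  simp only [chainWeight, gapPow_snoc, Fin.prod_univ_castSucc, Fin.snoc_castSucc, Fin.snoc_last]
  field_simp [ha N]
  ring

theorem mul_lastChainCoeff_succ (hk : k ^ 2 ≠ 1) (ha : ∀ i, a i ≠ 0) (n m : ℕ) :
    a (n + 1) * lastChainCoeff a k (n + 1) m =
      chainCoeff a k (n + 1) m + k ^ 2 * (a n * lastChainCoeff a k n m) := by
  calc a (n + 1) * lastChainCoeff a k (n + 1) m
      = ∑ v ∈ strictSeqs m (n + 1),
          chainWeight a k v * ∑ i ∈ range (n + 1 + 1 - lastSucc v), (k ^ 2) ^ i := by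
        simp only [lastChainCoeff, mul_sum, mul_chainWeight_snoc hk ha]
    _ = chainCoeff a k (n + 1) m + k ^ 2 * ∑ v ∈ strictSeqs m (n + 1),
          chainWeight a k v * ∑ i ∈ range (n + 1 - lastSucc v), (k ^ 2) ^ i := by
        rw [chainCoeff, mul_sum, ← sum_add_distrib]
        refine sum_congr rfl fun v hv => ?_
        rw [Nat.sub_add_comm (lastSucc_le hv), geom_sum_succ]
        ring
    _ = chainCoeff a k (n + 1) m + k ^ 2 * ∑ v ∈ strictSeqs m n,
          chainWeight a k v * ∑ i ∈ range (n + 1 - lastSucc v), (k ^ 2) ^ i := by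
        rw [sum_strictSeqs_succ_of_lastSucc _ fun v _ hv => by simp [hv]]
    _ = chainCoeff a k (n + 1) m + k ^ 2 * (a n * lastChainCoeff a k n m) := by
        simp only [lastChainCoeff, mul_sum, mul_chainWeight_snoc hk ha]

theorem chainCoeff_rec (hk : k ^ 2 ≠ 1) (ha : ∀ i, a i ≠ 0) (n m : ℕ) :
    a (n + 1) * chainCoeff a k (n + 2) (m + 1) =
      (a (n + 1) + k ^ 2 * a n) * chainCoeff a k (n + 1) (m + 1) + chainCoeff a k (n + 1) m
        - k ^ 2 * a n * chainCoeff a k n (m + 1) := by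
  have h₁ := chainCoeff_succ_succ a k (n + 1) m
  have h₀ := chainCoeff_succ_succ a k n m
  have h := mul_lastChainCoeff_succ hk ha n m
  rw [h₁, mul_add, h, h₀]
  ring

theorem mul_chainCoeff_one_one (hk : k ^ 2 ≠ 1) (ha : ∀ i, a i ≠ 0) :
    a 0 * chainCoeff a k 1 1 = 1 := by
  have h := mul_chainWeight_snoc hk ha (Fin.elim0 : Fin 0 → ℕ) 0
  rw [chainCoeff_succ_succ, chainCoeff_eq_zero_of_lt a k (show 0 < 0 + 1 from Nat.zero_lt_one), zero_add, lastChainCoeff,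
    strictSeqs_zero, sum_singleton, h]
  simp [chainWeight, gapPow, lastSucc]

end Weights

section Polynomials

open Polynomial

variable (a : ℕ → ℝ) (k : ℝ)

noncomputable def chainPoly (n : ℕ) : ℝ[X] :=
  ∑ m ∈ range (n + 1), C ((-1) ^ m * chainCoeff a k n m) * X ^ m

theorem coeff_chainPoly (n m : ℕ) :
    (chainPoly a k n).coeff m = (-1) ^ m * chainCoeff a k n m := by
  simp only [chainPoly, finsetSum_coeff, coeff_C_mul_X_pow, sum_ite_eq, mem_range]
  split_ifs with h
  · rfl
  · rw [chainCoeff_eq_zero_of_lt a k (by omega), mul_zero]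

theorem chainPoly_zero : chainPoly a k 0 = 1 := by
  simp [chainPoly, chainCoeff_zero]

variable {a k}

theorem C_mul_chainPoly_one (hk : k ^ 2 ≠ 1) (ha : ∀ i, a i ≠ 0) :
    C (a 0) * chainPoly a k 1 = C (a 0) - X := by
  ext (_ | _ | m)
  · simp [coeff_chainPoly, chainCoeff_zero]
  · simp [coeff_chainPoly, mul_chainCoeff_one_one hk ha]
  · simp [coeff_chainPoly, chainCoeff_eq_zero_of_lt a k (show 1 < m + 2 by omega), coeff_X]

theorem C_mul_chainPoly_succ_succ (hk : k ^ 2 ≠ 1) (ha : ∀ i, a i ≠ 0) (n : ℕ) :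
    C (a (n + 1)) * chainPoly a k (n + 2) =
      (C (a (n + 1) + k ^ 2 * a n) - X) * chainPoly a k (n + 1)
        - C (k ^ 2 * a n) * chainPoly a k n := by
  ext (_ | m)
  · simp [coeff_chainPoly, chainCoeff_zero, sub_mul]
  · simp only [coeff_sub, coeff_C_mul, sub_mul, coeff_X_mul, coeff_chainPoly, pow_succ]
    linear_combination -(-1) ^ m * chainCoeff_rec hk ha n m

theorem eval_chainPoly (n : ℕ) (x : ℝ) :
    (chainPoly a k n).eval x = 1 + ∑ m ∈ Icc 1 n, (-1) ^ m * chainCoeff a k n m * x ^ m := by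
  rw [← Finset.Ico_add_one_right_eq_Icc, sum_Ico_eq_sum_range, chainPoly, eval_finsetSum, sum_range_succ',
    add_comm]
  simp [chainCoeff_zero, add_comm]

end Polynomials

theorem statement0_general
    (a : ℕ → ℝ) (ha : ∀ n, 0 < a n)
    (k : ℝ) (hk : k ∈ Set.Ioo (0 : ℝ) 1)
    (P : ℕ → ℝ → ℝ)
    (hP0 : ∀ x, P 0 x = 1)
    (hP1 : ∀ x, alph a k 0 * P 1 x + (bet a k 0 - x) * P 0 x = 0)
    (hPrec : ∀ n, 1 ≤ n → ∀ x,
      alph a k n * P (n + 1) x + (bet a k n - x) * P n x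
        + alph a k (n - 1) * P (n - 1) x = 0)
    (n : ℕ) (x : ℝ) :
    (-1 : ℝ) ^ n * k ^ n * P n x =
      1 + ∑ m ∈ Finset.Icc 1 n, (-1 : ℝ) ^ m *
        (∑ j ∈ Finset.univ.filter
            (fun j : Fin m → Fin n => ∀ i₁ i₂ : Fin m, i₁ < i₂ → j i₁ < j i₂),
          gapPow k m (fun i => (j i : ℕ)) /
            ((1 - k ^ 2) ^ m * ∏ i : Fin m, a (j i))) * x ^ m := by
  have hk₂ : k ^ 2 ≠ 1 := (pow_lt_one₀ hk.1.le hk.2 two_ne_zero).ne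
  have ha₀ : ∀ i, a i ≠ 0 := fun i => (ha i).ne'
  have hP : ∀ n, (-1) ^ n * k ^ n * P n x = Polynomial.eval x (chainPoly a k n) := by
    intro n
    induction n using Nat.twoStepInduction with
    | zero => simp [hP0, chainPoly_zero]
    | one =>
      have hpoly := congrArg (Polynomial.eval x) (C_mul_chainPoly_one hk₂ ha₀)
      have hrec := hP1 x
      simp only [Polynomial.eval_mul, Polynomial.eval_sub, Polynomial.eval_C,
        Polynomial.eval_X] at hpoly
      simp only [alph, bet, hP0, mul_one] at hrec
      apply mul_left_cancel₀ (ha₀ 0)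
      linear_combination -hpoly - hrec
    | more n ih₀ ih₁ =>
      have hpoly := congrArg (Polynomial.eval x) (C_mul_chainPoly_succ_succ hk₂ ha₀ n)
      have hrec := hPrec (n + 1) n.succ_pos x
      simp only [Polynomial.eval_mul, Polynomial.eval_sub, Polynomial.eval_C,
        Polynomial.eval_X] at hpoly
      simp only [alph, bet, Nat.add_sub_cancel] at hrec
      apply mul_left_cancel₀ (ha₀ (n + 1))
      rw [hpoly, ← ih₀, ← ih₁]
      linear_combination (-1) ^ n * k ^ (n + 1) * hrec
  rw [hP, eval_chainPoly]
  refine congrArg (1 + ·) (sum_congr rfl fun m _ => ?_)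
  rw [chainCoeff, ← sum_filter_strictMono_eq_sum_strictSeqs]
  rfl

/-- Explicit formula for the orthonormal polynomials `P n`:
`(−1)^n k^n P_n(x) = 1 + Σ_{m=1}^{n} (−1)^m (Σ_{0 ≤ j₁ < … < j_m ≤ n−1} …) x^m`. -/
theorem statement0
    (a : ℕ → ℝ) (ha : ∀ n, 0 < a n) (hsum : Summable fun n => 1 / a n)
    (k : ℝ) (hk : k ∈ Set.Ioo (0 : ℝ) 1)
    (P : ℕ → ℝ → ℝ)
    (hP0 : ∀ x, P 0 x = 1)
    (hP1 : ∀ x, alph a k 0 * P 1 x + (bet a k 0 - x) * P 0 x = 0)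
    (hPrec : ∀ n, 1 ≤ n → ∀ x,
      alph a k n * P (n + 1) x + (bet a k n - x) * P n x
        + alph a k (n - 1) * P (n - 1) x = 0)
    (n : ℕ) (x : ℝ) :
    (-1 : ℝ) ^ n * k ^ n * P n x =
      1 + ∑ m ∈ Finset.Icc 1 n, (-1 : ℝ) ^ m *
        (∑ j ∈ Finset.univ.filter
            (fun j : Fin m → Fin n => ∀ i₁ i₂ : Fin m, i₁ < i₂ → j i₁ < j i₂),
          gapPow k m (fun i => (j i : ℕ)) /
            ((1 - k ^ 2) ^ m * ∏ i : Fin m, a (j i))) * x ^ m :=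
  statement0_general a ha k hk P hP0 hP1 hPrec n x
end

section
/- Let a_min = inf_{n≥0} a_n; then a_min > 0 and for every finitely supported real sequence (f_n)_{n≥0} one has Σ_{n≥0} β_n f_n² + 2 Σ_{n≥0} α_n f_n f_{n+1} ≥ a_min (1−k)² Σ_{n≥0} f_n². In particular the Jacobi quadratic form associated with the matrix with diagonal entries β_n and off-diagonal entries α_n is bounded below by the positive constant a_min(1−k)². -/
open scoped BigOperators

/-! The form telescopes into `∑ aₙ (fₙ + k fₙ₊₁)²`, which is at least `a_min ∑ (fₙ + k fₙ₊₁)²`;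
the pointwise bound `(x + k y)² ≥ (1 - k) x² - k (1 - k) y²` together with `∑ fₙ₊₁² ≤ ∑ fₙ²`
then gives `(1 - k)² ∑ fₙ²`. Summability of `1 / aₙ` forces `aₙ → ∞`, so the infimum is a
minimum and hence positive. -/

open Filter Finset

lemma ciInf_pos_of_tendsto_cofinite_atTop {ι : Type*} [Nonempty ι] {a : ι → ℝ}
    (ha : ∀ i, 0 < a i) (h : Tendsto a cofinite atTop) : 0 < ⨅ i, a i := by
  obtain ⟨i₀, hi₀⟩ := h.exists_forall_le
  exact (ha i₀).trans_le (le_ciInf hi₀)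

lemma tendsto_cofinite_atTop_of_summable_one_div {ι : Type*} {a : ι → ℝ}
    (ha : ∀ i, 0 < a i) (hsum : Summable fun i => 1 / a i) : Tendsto a cofinite atTop := by
  have h : Tendsto (fun i => 1 / a i) cofinite (nhdsWithin 0 (Set.Ioi 0)) :=
    tendsto_nhdsWithin_iff.mpr
      ⟨hsum.tendsto_cofinite_zero, Eventually.of_forall fun i => one_div_pos.mpr (ha i)⟩
  simpa [Pi.inv_def] using h.inv_tendsto_nhdsGT_zero

lemma tsum_eq_sum_range_of_eq_zero {g : ℕ → ℝ} {N : ℕ} (hg : ∀ n, N ≤ n → g n = 0) :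
    ∑' n, g n = ∑ n ∈ range N, g n :=
  tsum_eq_sum fun n hn => hg n (by simpa using hn)

lemma sum_mul_sq_add_mul_eq (a : ℕ → ℝ) (k : ℝ) (f : ℕ → ℝ) (M : ℕ) :
    ∑ n ∈ range (M + 1), a n * (f n + k * f (n + 1)) ^ 2 =
      (∑ n ∈ range (M + 1), bet a k n * f n ^ 2) +
        2 * ∑ n ∈ range (M + 1), alph a k n * f n * f (n + 1) +
        k ^ 2 * a M * f (M + 1) ^ 2 := by
  induction M with
  | zero => simp [bet, alph]; ring
  | succ M ih =>
      rw [sum_range_succ, ih, sum_range_succ (fun n => bet a k n * f n ^ 2) (M + 1),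
        sum_range_succ (fun n => alph a k n * f n * f (n + 1)) (M + 1)]
      simp only [bet, alph]
      ring

lemma sub_mul_sq_le_sq_add_mul {k : ℝ} (hk : 0 ≤ k) (x y : ℝ) :
    (1 - k) * x ^ 2 - k * (1 - k) * y ^ 2 ≤ (x + k * y) ^ 2 := by
  have h : (x + k * y) ^ 2 = (1 - k) * x ^ 2 - k * (1 - k) * y ^ 2 + k * (x + y) ^ 2 := by ring
  rw [h]
  nlinarith [sq_nonneg (x + y)]

lemma sum_range_sq_succ_le (f : ℕ → ℝ) {M : ℕ} (hM : f (M + 1) = 0) :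
    ∑ n ∈ range (M + 1), f (n + 1) ^ 2 ≤ ∑ n ∈ range (M + 1), f n ^ 2 := by
  have h := sum_range_succ' (fun n => f n ^ 2) (M + 1)
  rw [sum_range_succ, hM] at h
  nlinarith [sq_nonneg (f 0)]

lemma one_sub_sq_mul_sum_sq_le {k : ℝ} (hk₀ : 0 ≤ k) (hk₁ : k ≤ 1) (f : ℕ → ℝ) {M : ℕ}
    (hM : f (M + 1) = 0) :
    (1 - k) ^ 2 * ∑ n ∈ range (M + 1), f n ^ 2 ≤
      ∑ n ∈ range (M + 1), (f n + k * f (n + 1)) ^ 2 := by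
  have hshift := mul_le_mul_of_nonneg_left (sum_range_sq_succ_le f hM)
    (mul_nonneg hk₀ (sub_nonneg.mpr hk₁))
  calc (1 - k) ^ 2 * ∑ n ∈ range (M + 1), f n ^ 2
      ≤ (1 - k) * ∑ n ∈ range (M + 1), f n ^ 2
          - k * (1 - k) * ∑ n ∈ range (M + 1), f (n + 1) ^ 2 := by linarith
    _ = ∑ n ∈ range (M + 1), ((1 - k) * f n ^ 2 - k * (1 - k) * f (n + 1) ^ 2) := by
        rw [mul_sum, mul_sum, sum_sub_distrib]
    _ ≤ ∑ n ∈ range (M + 1), (f n + k * f (n + 1)) ^ 2 :=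
        sum_le_sum fun n _ => sub_mul_sq_le_sq_add_mul hk₀ _ _

/-- The Jacobi quadratic form is bounded below by
`a_min (1−k)²` with `a_min = inf_n a_n > 0`, on finitely supported sequences. -/
theorem statement1
    (a : ℕ → ℝ) (ha : ∀ n, 0 < a n) (hsum : Summable fun n => 1 / a n)
    (k : ℝ) (hk : k ∈ Set.Ioo (0 : ℝ) 1)
    (f : ℕ → ℝ) (hf : ∃ N, ∀ n, N ≤ n → f n = 0) :
    0 < ⨅ n, a n ∧
      (∑' n, bet a k n * f n ^ 2) + 2 * ∑' n, alph a k n * f n * f (n + 1) ≥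
        (⨅ n, a n) * (1 - k) ^ 2 * ∑' n, f n ^ 2 := by
  have hmin : 0 < ⨅ n, a n :=
    ciInf_pos_of_tendsto_cofinite_atTop ha (tendsto_cofinite_atTop_of_summable_one_div ha hsum)
  refine ⟨hmin, ?_⟩
  obtain ⟨M, hM⟩ := hf
  have hzero : ∀ n, M + 1 ≤ n → f n = 0 := fun n hn => hM n (by omega)
  have hform := sum_mul_sq_add_mul_eq a k f M
  rw [hzero (M + 1) le_rfl, zero_pow two_ne_zero, mul_zero, add_zero] at hform
  rw [tsum_eq_sum_range_of_eq_zero (N := M + 1) fun n hn => by simp [hzero n hn],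
    tsum_eq_sum_range_of_eq_zero (N := M + 1) fun n hn => by simp [hzero n hn],
    tsum_eq_sum_range_of_eq_zero (N := M + 1) fun n hn => by simp [hzero n hn],
    ge_iff_le, ← hform, mul_assoc]
  have hbdd : BddBelow (Set.range a) := ⟨0, by rintro _ ⟨m, rfl⟩; exact (ha m).le⟩
  calc (⨅ n, a n) * ((1 - k) ^ 2 * ∑ n ∈ range (M + 1), f n ^ 2)
      ≤ (⨅ n, a n) * ∑ n ∈ range (M + 1), (f n + k * f (n + 1)) ^ 2 :=
        mul_le_mul_of_nonneg_left
          (one_sub_sq_mul_sum_sq_le hk.1.le hk.2.le f (hzero (M + 1) le_rfl)) hmin.le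
    _ ≤ ∑ n ∈ range (M + 1), a n * (f n + k * f (n + 1)) ^ 2 := by
        rw [mul_sum]
        exact sum_le_sum fun n _ => mul_le_mul_of_nonneg_right (ciInf_le hbdd n) (sq_nonneg _)
end

section
/- For every z ∈ ℂ one has α_0 Φ_1(z) + (β_0 − z) Φ_0(z) − 𝔉(z) = 0, where Φ_n(z) = (−1)^n k^{−n} 𝔚_n(z). -/
open scoped BigOperators

/-! Since `Φ₀ = 𝔚₀` and `α₀ Φ₁ = -a₀ 𝔚₁`, the claim reads `a₀ (𝔚₀ - 𝔚₁) - z 𝔚₀ = 𝔉`. Comparing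
coefficients, this is `a₀ (d₀,₀ - d₁,₀) = 1` together with
`a₀ (d₀,ₘ₊₁ - d₁,ₘ₊₁) + d₀,ₘ = cₘ₊₁`. The difference `d₀,· - d₁,·` keeps exactly the tuples with
`j₀ = 0`; splitting off that entry, the two summands attached to the remaining tuple combine
through `(1 - q ^ j) + (1 - q) q ^ j = 1 - q ^ (j + 1)` with `q = k²`, which is the summand of
`cₘ₊₁`.

Convergence for every `z` comes from bounding the sum over increasing `m`-tuples of
`∏ 1 / a_{jᵢ}` by `∏_{i < m} ∑_{l ≥ i} 1 / a_l`, a product of tails tending to `0`. -/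

open Finset Filter Topology

section IncreasingTuples

theorem hasSum_prod_pi {β : Type*} {m : ℕ} (g : Fin m → β → ℝ) (hg0 : ∀ i b, 0 ≤ g i b)
    (hg : ∀ i, Summable (g i)) :
    HasSum (fun u : Fin m → β => ∏ i, g i (u i)) (∏ i, ∑' b, g i b) := by
  induction m with
  | zero => simp
  | succ m ih =>
    have htail := ih (fun i => g i.succ) (fun i => hg0 i.succ) fun i => hg i.succ
    have hsum := (hg 0).mul_of_nonneg htail.summable (fun b => hg0 0 b)
      fun u => prod_nonneg fun i _ => hg0 i.succ (u i)
    have hprod := (hg 0).hasSum.mul htail hsum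
    rw [← (Fin.consEquiv fun _ => β).hasSum_iff, Fin.prod_univ_succ]
    simpa [Function.comp_def, Fin.consEquiv, Fin.prod_univ_succ] using hprod

theorem le_apply_of_strictMono {m : ℕ} {j : Fin m → ℕ} (hj : StrictMono j) (i : Fin m) :
    (i : ℕ) ≤ j i := by
  obtain ⟨i, hi⟩ := i
  induction i with
  | zero => exact Nat.zero_le _
  | succ i ih =>
    exact (Nat.succ_le_succ (ih (by omega))).trans
      (hj (show (⟨i, _⟩ : Fin m) < ⟨i + 1, hi⟩ by simp))

/-- Shifting the `i`-th entry of an increasing tuple down by `i` is injective, which bounds a sum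
over increasing tuples by a product of tails. -/
theorem tsum_le_mul_prod_tsum_nat_add {m : ℕ} {f : ℕ → ℝ} (hf0 : ∀ n, 0 ≤ f n) (hf : Summable f)
    {s : Set (Fin m → ℕ)} (hs : ∀ j ∈ s, StrictMono j) {φ : (Fin m → ℕ) → ℝ} {c : ℝ}
    (hc : 0 ≤ c) (hφ0 : ∀ j ∈ s, 0 ≤ φ j) (hφ : ∀ j ∈ s, φ j ≤ c * ∏ i, f (j i)) :
    ∑' j : s, φ j ≤ c * ∏ i ∈ range m, ∑' n, f (n + i) := by
  set ψ : (Fin m → ℕ) → ℝ := fun u => c * ∏ i, f (u i + i)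
  have hψ : HasSum ψ (c * ∏ i ∈ range m, ∑' n, f (n + i)) := by
    rw [← Fin.prod_univ_eq_prod_range (fun i => ∑' n, f (n + i))]
    exact (hasSum_prod_pi (fun i n => f (n + i)) (fun _ _ => hf0 _)
      fun i => (summable_nat_add_iff i).2 hf).mul_left c
  let e : s → (Fin m → ℕ) := fun j i => j.1 i - i
  have he : Function.Injective e := by
    intro j j' h
    ext i
    have hi := congrFun h i
    have := le_apply_of_strictMono (hs j j.2) i
    have := le_apply_of_strictMono (hs j' j'.2) i
    simp only [e] at hi
    omega
  have hle : ∀ j : s, φ j ≤ ψ (e j) := fun j => by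
    simpa [ψ, e, Nat.sub_add_cancel (le_apply_of_strictMono (hs j j.2) _)] using hφ j j.2
  have hφs : Summable fun j : s => φ j :=
    .of_nonneg_of_le (fun j => hφ0 j j.2) hle (hψ.summable.comp_injective he)
  rw [← hψ.tsum_eq]
  exact hφs.tsum_le_tsum_of_inj e he
    (fun u _ => mul_nonneg hc (prod_nonneg fun i _ => hf0 _)) hle hψ.summable

theorem summable_pow_mul_prod_range {T : ℕ → ℝ} (hT0 : ∀ n, 0 ≤ T n)
    (hT : Tendsto T atTop (𝓝 0)) {x : ℝ} (hx : 0 ≤ x) :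
    Summable fun m => x ^ m * ∏ i ∈ range m, T i := by
  have hsmall : ∀ᶠ m in atTop, x * T m ≤ 1 / 2 :=
    (by simpa using hT.const_mul x : Tendsto (fun m => x * T m) atTop (𝓝 0)).eventually
      (eventually_le_nhds (by norm_num))
  refine summable_of_ratio_norm_eventually_le (by norm_num : (1 / 2 : ℝ) < 1) ?_
  filter_upwards [hsmall] with m hm
  have hterm : 0 ≤ x ^ m * ∏ i ∈ range m, T i :=
    mul_nonneg (pow_nonneg hx m) (prod_nonneg fun i _ => hT0 i)
  rw [Real.norm_of_nonneg hterm, Real.norm_of_nonneg (mul_nonneg (pow_nonneg hx _)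
    (prod_nonneg fun i _ => hT0 i))]
  calc x ^ (m + 1) * ∏ i ∈ range (m + 1), T i = x * T m * (x ^ m * ∏ i ∈ range m, T i) := by
        rw [prod_range_succ, pow_succ]; ring
    _ ≤ 1 / 2 * (x ^ m * ∏ i ∈ range m, T i) := mul_le_mul_of_nonneg_right hm hterm

end IncreasingTuples

theorem tsum_identity_of_coeff_recurrence {R : Type*} [TopologicalSpace R] [CommRing R]
    [IsTopologicalRing R] [T2Space R] {A z : R} {d₀ d₁ c : ℕ → R}
    (h₀ : Summable fun m => (-1) ^ m * d₀ m * z ^ m)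
    (h₁ : Summable fun m => (-1) ^ m * d₁ m * z ^ m)
    (hinit : A * (d₀ 0 - d₁ 0) = 1) (hrec : ∀ m, A * (d₀ (m + 1) - d₁ (m + 1)) + d₀ m = c (m + 1)) :
    A * (∑' m, (-1) ^ m * d₀ m * z ^ m - ∑' m, (-1) ^ m * d₁ m * z ^ m)
        - z * ∑' m, (-1) ^ m * d₀ m * z ^ m
      = 1 + ∑' m, (-1) ^ (m + 1) * c (m + 1) * z ^ (m + 1) := by
  have hdiff := (h₀.sub h₁).mul_left A
  rw [← h₀.tsum_sub h₁, ← (h₀.sub h₁).tsum_mul_left A, ← h₀.tsum_mul_left z,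
    hdiff.tsum_eq_zero_add, add_sub_assoc,
    ← ((summable_nat_add_iff 1).2 hdiff).tsum_sub (h₀.mul_left z)]
  congr 1
  · simpa using hinit
  · refine tsum_congr fun m => ?_
    rw [← hrec m]
    ring

section Coefficients

variable {a : ℕ → ℝ} {k : ℝ}

noncomputable def gapProd (k : ℝ) {m : ℕ} (j : Fin (m + 1) → ℕ) : ℝ :=
  ∏ i : Fin m, (1 - k ^ (2 * (j i.succ - j i.castSucc)))

noncomputable def dTerm (a : ℕ → ℝ) (k : ℝ) (m : ℕ) (j : Fin (m + 1) → ℕ) : ℝ :=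
  k ^ (2 * j 0) * gapProd k j / ((1 - k ^ 2) ^ m * ∏ i, a (j i))

noncomputable def cTerm (a : ℕ → ℝ) (k : ℝ) (m : ℕ) (j : Fin m → ℕ) : ℝ :=
  gapPow k m j / ((1 - k ^ 2) ^ m * ∏ i, a (j i))

theorem dC_eq_tsum_indicator (n m : ℕ) :
    dC a k n m = ∑' j, {j : Fin (m + 1) → ℕ | StrictMono j ∧ n ≤ j 0}.indicator (dTerm a k m) j :=
  _root_.tsum_subtype {j : Fin (m + 1) → ℕ | StrictMono j ∧ n ≤ j 0} (dTerm a k m)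

theorem cC_eq_tsum_indicator (m : ℕ) :
    cC a k m = ∑' j, {j : Fin m → ℕ | StrictMono j}.indicator (cTerm a k m) j :=
  _root_.tsum_subtype {j : Fin m → ℕ | StrictMono j} (cTerm a k m)

theorem pow_two_mul_le_one (hk : k ^ 2 < 1) (e : ℕ) : k ^ (2 * e) ≤ 1 := by
  rw [pow_mul]
  exact pow_le_one₀ (sq_nonneg k) hk.le

theorem one_sub_pow_two_mul_nonneg (hk : k ^ 2 < 1) (e : ℕ) : 0 ≤ 1 - k ^ (2 * e) :=
  sub_nonneg.2 (pow_two_mul_le_one hk e)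

theorem one_sub_pow_two_mul_le_one (e : ℕ) : 1 - k ^ (2 * e) ≤ 1 :=
  sub_le_self _ ((even_two_mul e).pow_nonneg k)

theorem one_sub_sq_pow_mul_prod_pos (ha : ∀ n, 0 < a n) (hk : k ^ 2 < 1) (m : ℕ) {p : ℕ}
    (j : Fin p → ℕ) : 0 < (1 - k ^ 2) ^ m * ∏ i, a (j i) :=
  mul_pos (pow_pos (sub_pos.2 hk) m) (prod_pos fun _ _ => ha _)

theorem dTerm_nonneg (ha : ∀ n, 0 < a n) (hk : k ^ 2 < 1) {m : ℕ} (j : Fin (m + 1) → ℕ) :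
    0 ≤ dTerm a k m j :=
  div_nonneg (mul_nonneg ((even_two_mul _).pow_nonneg k)
    (prod_nonneg fun _ _ => one_sub_pow_two_mul_nonneg hk _))
    (one_sub_sq_pow_mul_prod_pos ha hk m j).le

theorem dTerm_le (ha : ∀ n, 0 < a n) (hk : k ^ 2 < 1) {m : ℕ} (j : Fin (m + 1) → ℕ) :
    dTerm a k m j ≤ (1 - k ^ 2)⁻¹ ^ m * ∏ i, (a (j i))⁻¹ := by
  have hD := one_sub_sq_pow_mul_prod_pos ha hk m j
  have hnum : k ^ (2 * j 0) * gapProd k j ≤ 1 :=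
    mul_le_one₀ (pow_two_mul_le_one hk _)
      (prod_nonneg fun _ _ => one_sub_pow_two_mul_nonneg hk _)
      (prod_le_one (fun _ _ => one_sub_pow_two_mul_nonneg hk _)
        fun _ _ => one_sub_pow_two_mul_le_one _)
  calc dTerm a k m j ≤ 1 / ((1 - k ^ 2) ^ m * ∏ i, a (j i)) := by unfold dTerm; gcongr
    _ = (1 - k ^ 2)⁻¹ ^ m * ∏ i, (a (j i))⁻¹ := by
      rw [one_div, mul_inv, inv_pow, prod_inv_distrib]

theorem summable_dTerm (ha : ∀ n, 0 < a n) (hsum : Summable fun n => (a n)⁻¹) (hk : k ^ 2 < 1)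
    (m : ℕ) : Summable (dTerm a k m) :=
  .of_nonneg_of_le (dTerm_nonneg ha hk) (dTerm_le ha hk)
    ((hasSum_prod_pi (fun _ n => (a n)⁻¹) (fun _ n => (inv_pos.2 (ha n)).le)
      fun _ => hsum).summable.mul_left _)

theorem dC_nonneg (ha : ∀ n, 0 < a n) (hk : k ^ 2 < 1) (n m : ℕ) : 0 ≤ dC a k n m :=
  tsum_nonneg fun j => dTerm_nonneg ha hk j.1

theorem dC_le (ha : ∀ n, 0 < a n) (hsum : Summable fun n => (a n)⁻¹) (hk : k ^ 2 < 1)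
    (n m : ℕ) :
    dC a k n m ≤ (1 - k ^ 2)⁻¹ ^ m * ∏ i ∈ range (m + 1), ∑' l, (a (l + i))⁻¹ :=
  tsum_le_mul_prod_tsum_nat_add (fun n => (inv_pos.2 (ha n)).le) hsum
    (s := {j | StrictMono j ∧ n ≤ j 0}) (fun _ hj => hj.1)
    (pow_nonneg (inv_nonneg.2 (sub_pos.2 hk).le) m) (fun j _ => dTerm_nonneg ha hk j)
    fun j _ => dTerm_le ha hk j

theorem norm_neg_one_pow_mul_ofReal_mul_pow {x : ℝ} (hx : 0 ≤ x) (m : ℕ) (z : ℂ) :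
    ‖(-1 : ℂ) ^ m * (x : ℂ) * z ^ m‖ = x * ‖z‖ ^ m := by
  rw [norm_mul, norm_mul, norm_pow, norm_neg, norm_one, one_pow, one_mul, Complex.norm_real,
    Real.norm_of_nonneg hx, norm_pow]

theorem summable_dC_series (ha : ∀ n, 0 < a n) (hsum : Summable fun n => (a n)⁻¹)
    (hk : k ^ 2 < 1) (n : ℕ) (z : ℂ) :
    Summable fun m => (-1 : ℂ) ^ m * (dC a k n m : ℂ) * z ^ m := by
  set T : ℕ → ℝ := fun i => ∑' l, (a (l + i))⁻¹
  have hT0 : ∀ i, 0 ≤ T i := fun i => tsum_nonneg fun l => (inv_pos.2 (ha _)).le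
  have hT : Tendsto T atTop (𝓝 0) := tendsto_sum_nat_add fun l => (a l)⁻¹
  have hC : 0 ≤ (1 - k ^ 2)⁻¹ * ‖z‖ :=
    mul_nonneg (inv_nonneg.2 (sub_pos.2 hk).le) (norm_nonneg z)
  refine .of_norm_bounded ((summable_pow_mul_prod_range (fun i => hT0 (i + 1))
    (hT.comp (tendsto_add_atTop_nat 1)) hC).mul_left (T 0)) fun m => ?_
  rw [norm_neg_one_pow_mul_ofReal_mul_pow (dC_nonneg ha hk n m)]
  calc dC a k n m * ‖z‖ ^ m ≤ (1 - k ^ 2)⁻¹ ^ m * (∏ i ∈ range (m + 1), T i) * ‖z‖ ^ m := by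
        gcongr
        exact dC_le ha hsum hk n m
    _ = T 0 * (((1 - k ^ 2)⁻¹ * ‖z‖) ^ m * ∏ i ∈ range m, T (i + 1)) := by
        rw [prod_range_succ']
        ring

theorem dC_zero_sub_dC_one {m : ℕ} (hs : Summable (dTerm a k m)) :
    dC a k 0 m - dC a k 1 m = ∑' j, {j : Fin (m + 1) → ℕ | j 0 = 0}.indicator
      ({j | StrictMono j}.indicator (dTerm a k m)) j := by
  rw [dC_eq_tsum_indicator, dC_eq_tsum_indicator, ← (hs.indicator _).tsum_sub (hs.indicator _)]
  refine tsum_congr fun j => ?_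
  by_cases h : StrictMono j <;> by_cases h0 : j 0 = 0 <;>
    simp [h, h0, Nat.one_le_iff_ne_zero]

theorem tsum_indicator_zero_eq_tsum_cons {α : Type*} [AddCommMonoid α] [TopologicalSpace α]
    {m : ℕ} (g : (Fin (m + 1) → ℕ) → α) :
    ∑' j, {j : Fin (m + 1) → ℕ | j 0 = 0}.indicator g j = ∑' j', g (Fin.cons 0 j') := by
  rw [← (Fin.cons_right_injective (α := fun _ => ℕ) 0).tsum_eq]
  · exact tsum_congr fun j' => Set.indicator_of_mem (by simp) g
  · intro j hj
    have h0 : j 0 = 0 := by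
      by_contra h
      exact hj (Set.indicator_of_notMem (s := {j : Fin (m + 1) → ℕ | j 0 = 0}) h g)
    exact ⟨Fin.tail j, by rw [← h0]; exact Fin.cons_self_tail j⟩

theorem a_zero_mul_dC_zero_sub_dC_one_zero (ha : ∀ n, 0 < a n)
    (hsum : Summable fun n => (a n)⁻¹) (hk : k ^ 2 < 1) :
    a 0 * (dC a k 0 0 - dC a k 1 0) = 1 := by
  rw [dC_zero_sub_dC_one (summable_dTerm ha hsum hk 0), tsum_eq_single (fun _ => 0)]
  · simp [dTerm, gapProd, Subsingleton.strictMono, (ha 0).ne']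
  · intro j hj
    have h0 : j 0 ≠ 0 := fun h => hj (funext fun i => Fin.fin_one_eq_zero i ▸ h)
    simp [h0]

theorem gapPow_succ {m : ℕ} (j : Fin (m + 1) → ℕ) :
    gapPow k (m + 1) j = (1 - k ^ (2 * (j 0 + 1))) * gapProd k j := by
  rw [gapPow, Fin.prod_univ_succ]
  congr 1
  refine prod_congr rfl fun i _ => ?_
  simp only [Fin.val_succ, Nat.add_one_ne_zero, if_false, Nat.add_sub_cancel,
    Nat.add_sub_add_right]
  rfl

theorem dTerm_cons_zero {m : ℕ} (j : Fin (m + 1) → ℕ) :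
    dTerm a k (m + 1) (Fin.cons 0 j) =
      (1 - k ^ (2 * j 0)) * gapProd k j / ((1 - k ^ 2) ^ (m + 1) * (a 0 * ∏ i, a (j i))) := by
  simp [dTerm, gapProd, Fin.prod_univ_succ]

theorem mul_dTerm_cons_zero_add_dTerm (ha : ∀ n, 0 < a n) (hk : k ^ 2 < 1) {m : ℕ}
    (j : Fin (m + 1) → ℕ) :
    a 0 * dTerm a k (m + 1) (Fin.cons 0 j) + dTerm a k m j = cTerm a k (m + 1) j := by
  have hq : 1 - k ^ 2 ≠ 0 := (sub_pos.2 hk).ne'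
  have hA : ∏ i, a (j i) ≠ 0 := (prod_pos fun _ _ => ha _).ne'
  rw [dTerm_cons_zero, cTerm, gapPow_succ, dTerm, mul_add 2, pow_add]
  field_simp [(ha 0).ne']
  ring

theorem indicator_strictMono_cons_zero {m : ℕ} (j : Fin (m + 1) → ℕ) :
    {j | StrictMono j}.indicator (dTerm a k (m + 1)) (Fin.cons 0 j) =
      {j | StrictMono j}.indicator (fun j => dTerm a k (m + 1) (Fin.cons 0 j)) j := by
  have hmono : StrictMono (Fin.cons 0 j : Fin (m + 2) → ℕ) ↔ 0 < j 0 ∧ StrictMono j :=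
    strictMono_vecCons
  by_cases h : StrictMono j
  · rcases Nat.eq_zero_or_pos (j 0) with h0 | h0
    · simp [hmono, h, h0, dTerm_cons_zero]
    · simp [hmono, h, h0]
  · simp [hmono, h]

theorem dC_recurrence (ha : ∀ n, 0 < a n) (hsum : Summable fun n => (a n)⁻¹) (hk : k ^ 2 < 1)
    (m : ℕ) : a 0 * (dC a k 0 (m + 1) - dC a k 1 (m + 1)) + dC a k 0 m = cC a k (m + 1) := by
  have hs := summable_dTerm ha hsum hk
  rw [dC_zero_sub_dC_one (hs _), tsum_indicator_zero_eq_tsum_cons, dC_eq_tsum_indicator 0 m,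
    cC_eq_tsum_indicator, ← tsum_mul_left, ← Summable.tsum_add]
  · refine tsum_congr fun j => ?_
    rw [indicator_strictMono_cons_zero]
    by_cases h : StrictMono j
    · simp [h, mul_dTerm_cons_zero_add_dTerm ha hk]
    · simp [h]
  · exact (((hs _).indicator _).comp_injective (Fin.cons_right_injective 0)).mul_left _
  · exact (hs m).indicator _

end Coefficients

/-- For every `z ∈ ℂ`, `α₀ Φ₁(z) + (β₀ − z) Φ₀(z) − 𝔉(z) = 0`. -/
theorem statement4
    (a : ℕ → ℝ) (ha : ∀ n, 0 < a n) (hsum : Summable fun n => 1 / a n)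
    (k : ℝ) (hk : k ∈ Set.Ioo (0 : ℝ) 1)
    (z : ℂ) :
    (alph a k 0 : ℂ) * Phi a k 1 z + ((bet a k 0 : ℂ) - z) * Phi a k 0 z
      - Fgt a k z = 0 := by
  have hsum' : Summable fun n => (a n)⁻¹ := by simpa only [one_div] using hsum
  have hk2 : k ^ 2 < 1 := by nlinarith [hk.1, hk.2]
  have key := tsum_identity_of_coeff_recurrence (A := (a 0 : ℂ)) (z := z)
    (d₀ := fun m => (dC a k 0 m : ℂ)) (d₁ := fun m => (dC a k 1 m : ℂ))
    (c := fun m => (cC a k m : ℂ)) (summable_dC_series ha hsum' hk2 0 z)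
    (summable_dC_series ha hsum' hk2 1 z)
    (by exact_mod_cast a_zero_mul_dC_zero_sub_dC_one_zero ha hsum' hk2)
    fun m => by exact_mod_cast dC_recurrence ha hsum' hk2 m
  have hk0 : (k : ℂ) ≠ 0 := Complex.ofReal_ne_zero.2 hk.1.ne'
  rw [Fgt, ← key]
  simp only [alph, bet, Phi, Wgt]
  push_cast
  field_simp
  ring
end

section
/- If λ ∈ ℂ satisfies 𝔉(λ) = 0, then the sequences (P_n(λ)) and (Φ_n(λ)) are proportional: for every n ≥ 0, Φ_n(λ) = 𝔚(λ) · P_n(λ), where Φ_n(z) = (−1)^n k^{−n} 𝔚_n(z) and 𝔚 = 𝔚_0. -/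
open scoped BigOperators

/-!
Write `q = k²` and let `c_{p,m}` be `c_m` with all indices `≥ p` and the first gap measured
from `p - 1` (so `c_{0,m} = c_m`), and `C_p(z) = ∑ (-1)^m c_{p,m} z^m`. Splitting off the first
index of a tuple gives `a_n (d_{n,m} - d_{n+1,m}) = q^n c_{n+1,m}` and
`q^p (c_{p,m+1} - c_{p+1,m+1}) = d_{p,m}`, i.e. `a_n (𝔚_n - 𝔚_{n+1}) = q^n C_{n+1}` and
`q^p (C_p - C_{p+1}) = -z 𝔚_p`. Eliminating the `C_p`, the `𝔚_n` satisfy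
`a_{n+1} (𝔚_{n+1} - 𝔚_{n+2}) + q a_n (𝔚_{n+1} - 𝔚_n) = z 𝔚_{n+1}` and
`𝔉 = C_0 = a_0 (𝔚_0 - 𝔚_1) - z 𝔚_0`. Hence `Φ_n(λ)` satisfies the recurrence of `P_n(λ)` for
`n ≥ 1`, and also the initial one exactly when `𝔉(λ) = 0`; a solution of the recurrence is
determined by its value at `0`, where `Φ_0 = 𝔚 = 𝔚 P_0`.

All coefficients are nonnegative, and with `R_p = ∑_{t ≥ p} 1/a_t` telescoping gives
`c_{p,m} ≤ (R_p / (1 - q))^m / m!`; so every series is entire and the rearrangements are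
legitimate.
-/

open Finset
open scoped Nat

namespace JacobiSeries

lemma eq_of_threeTerm_recurrence {R : Type*} [CommRing R] [IsDomain R] {α β x y : ℕ → R}
    (hα : ∀ n, α n ≠ 0) (hx₀ : α 0 * x 1 + β 0 * x 0 = 0)
    (hx : ∀ n, α (n + 1) * x (n + 2) + β (n + 1) * x (n + 1) + α n * x n = 0)
    (hy₀ : α 0 * y 1 + β 0 * y 0 = 0)
    (hy : ∀ n, α (n + 1) * y (n + 2) + β (n + 1) * y (n + 1) + α n * y n = 0)
    (h0 : x 0 = y 0) : x = y := by
  have h : ∀ n, x n = y n ∧ x (n + 1) = y (n + 1) := by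
    intro n
    induction n with
    | zero => exact ⟨h0, mul_left_cancel₀ (hα 0) (by linear_combination hx₀ - hy₀ - β 0 * h0)⟩
    | succ n ih =>
      exact ⟨ih.2, mul_left_cancel₀ (hα (n + 1))
        (by linear_combination hx n - hy n - β (n + 1) * ih.2 - α n * ih.1)⟩
  exact funext fun n => (h n).1

section TailSum

variable {x : ℕ → ℝ}

lemma mul_sub_mul_pow_le_pow_sub_pow {u v : ℝ} (hv : 0 ≤ v) (hvu : v ≤ u) (m : ℕ) :
    (m + 1) * (u - v) * v ^ m ≤ u ^ (m + 1) - v ^ (m + 1) := by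
  rw [← geom_sum₂_mul, mul_comm _ (u - v), mul_comm _ (u - v), mul_assoc]
  refine mul_le_mul_of_nonneg_left ?_ (sub_nonneg.2 hvu)
  calc (m + 1 : ℝ) * v ^ m = ∑ i ∈ range (m + 1), v ^ i * v ^ (m + 1 - 1 - i) := by
        rw [sum_congr rfl fun i hi => by
          rw [← pow_add, Nat.add_sub_cancel, Nat.add_sub_cancel' (mem_range_succ_iff.1 hi)],
          sum_const, card_range, nsmul_eq_mul, Nat.cast_succ]
    _ ≤ ∑ i ∈ range (m + 1), u ^ i * v ^ (m + 1 - 1 - i) :=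
        sum_le_sum fun i _ => by gcongr

noncomputable def tailSum (x : ℕ → ℝ) (p : ℕ) : ℝ := ∑' t, x (p + t)

lemma summable_nat_add_left (hx : Summable x) (p : ℕ) : Summable fun t => x (p + t) := by
  simpa only [add_comm p] using (summable_nat_add_iff p).2 hx

lemma tailSum_eq_add (hx : Summable x) (p : ℕ) : tailSum x p = x p + tailSum x (p + 1) := by
  rw [tailSum, (summable_nat_add_left hx p).tsum_eq_zero_add, tailSum]
  simp only [add_zero, add_assoc, add_comm 1]

lemma tailSum_nonneg (hx0 : ∀ n, 0 ≤ x n) (p : ℕ) : 0 ≤ tailSum x p :=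
  tsum_nonneg fun _ => hx0 _

lemma tailSum_antitone (hx0 : ∀ n, 0 ≤ x n) (hx : Summable x) : Antitone (tailSum x) :=
  antitone_nat_of_succ_le fun p => by linarith [tailSum_eq_add hx p, hx0 p]

lemma summable_mul_tailSum_pow (hx0 : ∀ n, 0 ≤ x n) (hx : Summable x) (p m : ℕ) :
    Summable fun t => x (p + t) * tailSum x (p + t + 1) ^ m :=
  ((summable_nat_add_left hx p).mul_right (tailSum x 0 ^ m)).of_nonneg_of_le
    (fun _ => mul_nonneg (hx0 _) (pow_nonneg (tailSum_nonneg hx0 _) m))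
    fun _ => mul_le_mul_of_nonneg_left
      (pow_le_pow_left₀ (tailSum_nonneg hx0 _) (tailSum_antitone hx0 hx (Nat.zero_le _)) m)
      (hx0 _)

lemma tsum_mul_tailSum_pow_le (hx0 : ∀ n, 0 ≤ x n) (hx : Summable x) (p m : ℕ) :
    (m + 1) * ∑' t, x (p + t) * tailSum x (p + t + 1) ^ m ≤ tailSum x p ^ (m + 1) := by
  rw [← tsum_mul_left]
  refine ((summable_mul_tailSum_pow hx0 hx p m).mul_left _).tsum_le_of_sum_range_le fun N => ?_
  calc ∑ t ∈ range N, (m + 1 : ℝ) * (x (p + t) * tailSum x (p + t + 1) ^ m)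
      ≤ ∑ t ∈ range N, (tailSum x (p + t) ^ (m + 1) - tailSum x (p + t + 1) ^ (m + 1)) := by
        refine sum_le_sum fun t _ => ?_
        have hgap : tailSum x (p + t) - tailSum x (p + t + 1) = x (p + t) := by
          rw [tailSum_eq_add hx (p + t)]; ring
        have := mul_sub_mul_pow_le_pow_sub_pow (tailSum_nonneg hx0 (p + t + 1))
          (tailSum_antitone hx0 hx (Nat.le_succ _)) m
        rw [hgap] at this
        linarith
    _ = tailSum x p ^ (m + 1) - tailSum x (p + N) ^ (m + 1) := by
        simpa only [add_assoc, add_zero] using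
          sum_range_sub' (fun t => tailSum x (p + t) ^ (m + 1)) N
    _ ≤ tailSum x p ^ (m + 1) := sub_le_self _ (pow_nonneg (tailSum_nonneg hx0 _) _)

end TailSum

section Coefficients

variable (a : ℕ → ℝ) (q : ℝ)

-- `cCoeff a q p m = c_{p,m}`, summed over the first index `j₁ = p + t`.
noncomputable def cCoeff : ℕ → ℕ → ℝ
  | _, 0 => 1
  | p, m + 1 => ∑' t, (1 - q ^ (t + 1)) / ((1 - q) * a (p + t)) * cCoeff (p + t + 1) m

-- `dCoeff a (k ^ 2) n m = d_{n,m}`, summed over the first index `j₀ = n + t`.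
noncomputable def dCoeff (n m : ℕ) : ℝ := ∑' t, q ^ (n + t) / a (n + t) * cCoeff a q (n + t + 1) m

variable {a q}

lemma cCoeff_zero (p : ℕ) : cCoeff a q p 0 = 1 := rfl

lemma cCoeff_succ (p m : ℕ) : cCoeff a q p (m + 1) =
    ∑' t, (1 - q ^ (t + 1)) / ((1 - q) * a (p + t)) * cCoeff a q (p + t + 1) m := rfl

lemma gapWeight_nonneg (ha : ∀ n, 0 < a n) (hq0 : 0 ≤ q) (hq1 : q < 1) (n h : ℕ) :
    0 ≤ (1 - q ^ n) / ((1 - q) * a h) :=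
  div_nonneg (sub_nonneg.2 (pow_le_one₀ hq0 hq1.le)) (mul_nonneg (sub_nonneg.2 hq1.le) (ha _).le)

lemma gapWeight_le (ha : ∀ n, 0 < a n) (hq0 : 0 ≤ q) (hq1 : q < 1) (n h : ℕ) :
    (1 - q ^ n) / ((1 - q) * a h) ≤ (1 - q)⁻¹ * (a h)⁻¹ := by
  rw [← mul_inv, ← one_div]
  exact div_le_div_of_nonneg_right (by linarith [pow_nonneg hq0 n])
    (mul_nonneg (sub_nonneg.2 hq1.le) (ha _).le)

lemma cCoeff_nonneg (ha : ∀ n, 0 < a n) (hq0 : 0 ≤ q) (hq1 : q < 1) (p m : ℕ) :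
    0 ≤ cCoeff a q p m := by
  induction m generalizing p with
  | zero => exact zero_le_one
  | succ m ih => exact tsum_nonneg fun _ => mul_nonneg (gapWeight_nonneg ha hq0 hq1 _ _) (ih _)

lemma cCoeff_le (ha : ∀ n, 0 < a n) (hs : Summable fun n => (a n)⁻¹) (hq0 : 0 ≤ q) (hq1 : q < 1)
    (p m : ℕ) : cCoeff a q p m ≤ (tailSum (fun n => (a n)⁻¹) p / (1 - q)) ^ m / m ! := by
  set R := tailSum fun n => (a n)⁻¹
  have hinv : ∀ n, 0 ≤ (a n)⁻¹ := fun n => inv_nonneg.2 (ha n).le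
  have hq : 0 < 1 - q := sub_pos.2 hq1
  induction m generalizing p with
  | zero => simp [cCoeff_zero]
  | succ m ih =>
    set C := ((1 - q) ^ (m + 1) * m !)⁻¹
    have hterm : ∀ t, (1 - q ^ (t + 1)) / ((1 - q) * a (p + t)) * cCoeff a q (p + t + 1) m
        ≤ C * ((a (p + t))⁻¹ * R (p + t + 1) ^ m) := fun t => by
      calc _ ≤ (1 - q)⁻¹ * (a (p + t))⁻¹ * ((R (p + t + 1) / (1 - q)) ^ m / m !) :=
            mul_le_mul (gapWeight_le ha hq0 hq1 _ _) (ih _) (cCoeff_nonneg ha hq0 hq1 _ _)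
              (mul_nonneg (inv_nonneg.2 hq.le) (hinv _))
        _ = C * ((a (p + t))⁻¹ * R (p + t + 1) ^ m) := by
            simp only [C, div_pow, pow_succ]; field_simp
    have hsum := summable_mul_tailSum_pow hinv hs p m
    calc cCoeff a q p (m + 1) ≤ ∑' t, C * ((a (p + t))⁻¹ * R (p + t + 1) ^ m) :=
          Summable.tsum_le_tsum hterm ((hsum.mul_left C).of_nonneg_of_le
            (fun _ => mul_nonneg (gapWeight_nonneg ha hq0 hq1 _ _) (cCoeff_nonneg ha hq0 hq1 _ _))
            hterm) (hsum.mul_left C)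
      _ = C * ∑' t, (a (p + t))⁻¹ * R (p + t + 1) ^ m := tsum_mul_left
      _ ≤ C * (R p ^ (m + 1) / (m + 1)) := by
          gcongr
          rw [le_div_iff₀ (by positivity), mul_comm]
          exact tsum_mul_tailSum_pow_le hinv hs p m
      _ = (R p / (1 - q)) ^ (m + 1) / (m + 1)! := by
          simp only [C, div_pow, Nat.factorial_succ]; push_cast; field_simp

lemma cCoeff_le_uniform (ha : ∀ n, 0 < a n) (hs : Summable fun n => (a n)⁻¹) (hq0 : 0 ≤ q)
    (hq1 : q < 1) (p m : ℕ) :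
    cCoeff a q p m ≤ (tailSum (fun n => (a n)⁻¹) 0 / (1 - q)) ^ m / m ! := by
  have hinv : ∀ n, 0 ≤ (a n)⁻¹ := fun n => inv_nonneg.2 (ha n).le
  refine (cCoeff_le ha hs hq0 hq1 p m).trans ?_
  gcongr
  · exact div_nonneg (tailSum_nonneg hinv p) (sub_nonneg.2 hq1.le)
  · exact tailSum_antitone hinv hs (Nat.zero_le p)

lemma summable_cCoeff_succ (ha : ∀ n, 0 < a n) (hs : Summable fun n => (a n)⁻¹) (hq0 : 0 ≤ q)
    (hq1 : q < 1) (p m : ℕ) :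
    Summable fun t => (1 - q ^ (t + 1)) / ((1 - q) * a (p + t)) * cCoeff a q (p + t + 1) m :=
  ((summable_nat_add_left hs p).mul_left _).of_nonneg_of_le
    (fun _ => mul_nonneg (gapWeight_nonneg ha hq0 hq1 _ _) (cCoeff_nonneg ha hq0 hq1 _ _))
    fun _ => (mul_le_mul (gapWeight_le ha hq0 hq1 _ _) (cCoeff_le_uniform ha hs hq0 hq1 _ m)
      (cCoeff_nonneg ha hq0 hq1 _ _)
      (mul_nonneg (inv_nonneg.2 (sub_pos.2 hq1).le) (inv_nonneg.2 (ha _).le))).trans_eq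
      (mul_right_comm _ _ _)

lemma qWeight_nonneg (ha : ∀ n, 0 < a n) (hq0 : 0 ≤ q) (n : ℕ) : 0 ≤ q ^ n / a n :=
  div_nonneg (pow_nonneg hq0 n) (ha n).le

lemma qWeight_le (ha : ∀ n, 0 < a n) (hq0 : 0 ≤ q) (hq1 : q < 1) (n : ℕ) :
    q ^ n / a n ≤ (a n)⁻¹ := by
  rw [div_eq_mul_inv]
  exact mul_le_of_le_one_left (inv_nonneg.2 (ha n).le) (pow_le_one₀ hq0 hq1.le)

lemma summable_dCoeff (ha : ∀ n, 0 < a n) (hs : Summable fun n => (a n)⁻¹) (hq0 : 0 ≤ q)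
    (hq1 : q < 1) (n m : ℕ) :
    Summable fun t => q ^ (n + t) / a (n + t) * cCoeff a q (n + t + 1) m :=
  ((summable_nat_add_left hs n).mul_right _).of_nonneg_of_le
    (fun _ => mul_nonneg (qWeight_nonneg ha hq0 _) (cCoeff_nonneg ha hq0 hq1 _ _))
    fun _ => mul_le_mul (qWeight_le ha hq0 hq1 _) (cCoeff_le_uniform ha hs hq0 hq1 _ m)
      (cCoeff_nonneg ha hq0 hq1 _ _) (inv_nonneg.2 (ha _).le)

lemma dCoeff_nonneg (ha : ∀ n, 0 < a n) (hq0 : 0 ≤ q) (hq1 : q < 1) (n m : ℕ) :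
    0 ≤ dCoeff a q n m :=
  tsum_nonneg fun _ => mul_nonneg (qWeight_nonneg ha hq0 _) (cCoeff_nonneg ha hq0 hq1 _ _)

lemma dCoeff_le (ha : ∀ n, 0 < a n) (hs : Summable fun n => (a n)⁻¹) (hq0 : 0 ≤ q)
    (hq1 : q < 1) (n m : ℕ) :
    dCoeff a q n m ≤
      tailSum (fun n => (a n)⁻¹) 0 * ((tailSum (fun n => (a n)⁻¹) 0 / (1 - q)) ^ m / m !) := by
  have hinv : ∀ n, 0 ≤ (a n)⁻¹ := fun n => inv_nonneg.2 (ha n).le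
  calc dCoeff a q n m
      ≤ ∑' t, (a (n + t))⁻¹ * ((tailSum (fun n => (a n)⁻¹) 0 / (1 - q)) ^ m / m !) :=
        Summable.tsum_le_tsum (fun t => mul_le_mul (qWeight_le ha hq0 hq1 _)
          (cCoeff_le_uniform ha hs hq0 hq1 _ m) (cCoeff_nonneg ha hq0 hq1 _ _) (hinv _))
          (summable_dCoeff ha hs hq0 hq1 n m) ((summable_nat_add_left hs n).mul_right _)
    _ = tailSum (fun n => (a n)⁻¹) n * ((tailSum (fun n => (a n)⁻¹) 0 / (1 - q)) ^ m / m !) :=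
        tsum_mul_right
    _ ≤ _ := by
        gcongr
        · exact div_nonneg (pow_nonneg (div_nonneg (tailSum_nonneg hinv 0)
            (sub_nonneg.2 hq1.le)) m) (Nat.cast_nonneg _)
        · exact tailSum_antitone hinv hs (Nat.zero_le n)

lemma dCoeff_sub_dCoeff_succ (ha : ∀ n, 0 < a n) (hs : Summable fun n => (a n)⁻¹) (hq0 : 0 ≤ q)
    (hq1 : q < 1) (n m : ℕ) :
    a n * (dCoeff a q n m - dCoeff a q (n + 1) m) = q ^ n * cCoeff a q (n + 1) m := by
  rw [dCoeff, (summable_dCoeff ha hs hq0 hq1 n m).tsum_eq_zero_add, dCoeff]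
  simp only [add_zero, add_assoc, add_comm 1, add_sub_cancel_right]
  field_simp [(ha n).ne']

lemma cCoeff_sub_cCoeff_succ (ha : ∀ n, 0 < a n) (hs : Summable fun n => (a n)⁻¹)
    (hq0 : 0 ≤ q) (hq1 : q < 1) (p m : ℕ) :
    q ^ p * (cCoeff a q p (m + 1) - cCoeff a q (p + 1) (m + 1)) = dCoeff a q p m := by
  set w : ℕ → ℕ → ℝ := fun p t => (1 - q ^ (t + 1)) / ((1 - q) * a (p + t))
  set f : ℕ → ℝ := fun t => q ^ p * (w p t * cCoeff a q (p + t + 1) m)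
    - q ^ (p + t) / a (p + t) * cCoeff a q (p + t + 1) m
  have hq : 1 - q ≠ 0 := (sub_pos.2 hq1).ne'
  -- the summands of `q ^ p * c_{p,m+1} - d_{p,m}` are those of `q ^ p * c_{p+1,m+1}`, shifted
  have hf0 : f 0 = 0 := by
    simp only [f, w]
    field_simp [(ha p).ne']
    ring
  have hf : ∀ t, f (t + 1) = q ^ p * (w (p + 1) t * cCoeff a q (p + 1 + t + 1) m) := fun t => by
    simp only [f, w, show p + (t + 1) = p + 1 + t by ring]
    field_simp [(ha (p + 1 + t)).ne']
    ring
  have hshift : HasSum f (q ^ p * cCoeff a q (p + 1) (m + 1)) := by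
    refine (hasSum_nat_add_iff' 1).1 ?_
    simp only [sum_range_one, hf0, sub_zero, hf]
    exact (summable_cCoeff_succ ha hs hq0 hq1 (p + 1) m).hasSum.mul_left (q ^ p)
  have hdiff := ((summable_cCoeff_succ ha hs hq0 hq1 p m).hasSum.mul_left (q ^ p)).sub
    (summable_dCoeff ha hs hq0 hq1 p m).hasSum
  rw [← cCoeff_succ, ← dCoeff] at hdiff
  linarith [hdiff.unique hshift]

end Coefficients

section AltSeries

noncomputable def altSeries (c : ℕ → ℝ) (z : ℂ) : ℂ := ∑' m, (-1) ^ m * (c m : ℂ) * z ^ m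

lemma summable_altSeries {c : ℕ → ℝ} {C r : ℝ} (h : ∀ m, |c m| ≤ C * (r ^ m / m !)) (z : ℂ) :
    Summable fun m => (-1 : ℂ) ^ m * (c m : ℂ) * z ^ m :=
  ((Real.summable_pow_div_factorial (r * ‖z‖)).mul_left C).of_norm_bounded fun m => by
    rw [norm_mul, norm_mul, norm_pow, norm_neg, norm_one, one_pow, one_mul, Complex.norm_real,
      Real.norm_eq_abs, norm_pow, mul_pow, mul_div_right_comm, ← mul_assoc]
    exact mul_le_mul_of_nonneg_right (h m) (pow_nonneg (norm_nonneg z) m)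

lemma hasSum_altSeries_shift {c e : ℕ → ℝ} (h0 : e 0 = 0) (hsucc : ∀ m, e (m + 1) = c m)
    {z w : ℂ} (hc : HasSum (fun m => (-1 : ℂ) ^ m * (c m : ℂ) * z ^ m) w) :
    HasSum (fun m => (-1 : ℂ) ^ m * (e m : ℂ) * z ^ m) (-z * w) := by
  refine (hasSum_nat_add_iff' 1).1 ?_
  simp only [sum_range_one, h0, Complex.ofReal_zero, mul_zero, zero_mul, sub_zero, hsucc]
  exact (hc.mul_left (-z)).congr_fun fun m => by ring

end AltSeries

section Series

variable {a : ℕ → ℝ} {q : ℝ}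

lemma hasSum_altSeries_dCoeff (ha : ∀ n, 0 < a n) (hs : Summable fun n => (a n)⁻¹) (hq0 : 0 ≤ q)
    (hq1 : q < 1) (n : ℕ) (z : ℂ) :
    HasSum (fun m => (-1 : ℂ) ^ m * (dCoeff a q n m : ℂ) * z ^ m) (altSeries (dCoeff a q n) z) :=
  (summable_altSeries (fun m => (abs_of_nonneg (dCoeff_nonneg ha hq0 hq1 n m)).trans_le
    (dCoeff_le ha hs hq0 hq1 n m)) z).hasSum

lemma hasSum_altSeries_cCoeff (ha : ∀ n, 0 < a n) (hs : Summable fun n => (a n)⁻¹) (hq0 : 0 ≤ q)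
    (hq1 : q < 1) (p : ℕ) (z : ℂ) :
    HasSum (fun m => (-1 : ℂ) ^ m * (cCoeff a q p m : ℂ) * z ^ m) (altSeries (cCoeff a q p) z) :=
  (summable_altSeries (fun m => (abs_of_nonneg (cCoeff_nonneg ha hq0 hq1 p m)).trans_le
    ((cCoeff_le_uniform ha hs hq0 hq1 p m).trans_eq (one_mul _).symm)) z).hasSum

lemma altSeries_dCoeff_sub (ha : ∀ n, 0 < a n) (hs : Summable fun n => (a n)⁻¹) (hq0 : 0 ≤ q)
    (hq1 : q < 1) (n : ℕ) (z : ℂ) :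
    (a n : ℂ) * (altSeries (dCoeff a q n) z - altSeries (dCoeff a q (n + 1)) z)
      = q ^ n * altSeries (cCoeff a q (n + 1)) z := by
  refine (((hasSum_altSeries_dCoeff ha hs hq0 hq1 n z).sub
    (hasSum_altSeries_dCoeff ha hs hq0 hq1 (n + 1) z)).mul_left (a n : ℂ)).unique ?_
  refine ((hasSum_altSeries_cCoeff ha hs hq0 hq1 (n + 1) z).mul_left ((q : ℂ) ^ n)).congr_fun
    fun m => ?_
  have := congrArg Complex.ofReal (dCoeff_sub_dCoeff_succ ha hs hq0 hq1 n m)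
  push_cast at this
  linear_combination (-1 : ℂ) ^ m * z ^ m * this

lemma altSeries_cCoeff_sub (ha : ∀ n, 0 < a n) (hs : Summable fun n => (a n)⁻¹) (hq0 : 0 ≤ q)
    (hq1 : q < 1) (p : ℕ) (z : ℂ) :
    (q : ℂ) ^ p * (altSeries (cCoeff a q p) z - altSeries (cCoeff a q (p + 1)) z)
      = -z * altSeries (dCoeff a q p) z := by
  refine (((hasSum_altSeries_cCoeff ha hs hq0 hq1 p z).sub
    (hasSum_altSeries_cCoeff ha hs hq0 hq1 (p + 1) z)).mul_left ((q : ℂ) ^ p)).unique ?_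
  refine (hasSum_altSeries_shift (e := fun m => q ^ p * (cCoeff a q p m - cCoeff a q (p + 1) m))
    (by simp [cCoeff_zero]) (cCoeff_sub_cCoeff_succ ha hs hq0 hq1 p)
    (hasSum_altSeries_dCoeff ha hs hq0 hq1 p z)).congr_fun fun m => ?_
  push_cast
  ring

end Series

section Tuples

abbrev IncTuple (p m : ℕ) : Type := {j : Fin m → ℕ // StrictMono j ∧ ∀ i, p ≤ j i}

instance (p : ℕ) : Unique (IncTuple p 0) where
  default := ⟨finZeroElim, fun i => i.elim0, finZeroElim⟩
  uniq _ := Subtype.ext (funext finZeroElim)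

def IncTuple.consEquiv (p m : ℕ) : (Σ t : ℕ, IncTuple (p + t + 1) m) ≃ IncTuple p (m + 1) where
  toFun x := ⟨Fin.cons (p + x.1) x.2.1, Fin.strictMono_cons.2 ⟨x.2.2.2, x.2.2.1⟩,
    Fin.cases (by simp) fun i => by have := x.2.2.2 i; simp only [Fin.cons_succ]; omega⟩
  invFun j :=
    have h := Fin.strictMono_cons.1 ((Fin.cons_self_tail j.1).symm ▸ j.2.1 :
      StrictMono (Fin.cons (j.1 0) (Fin.tail j.1)))
    ⟨j.1 0 - p, Fin.tail j.1, h.2, fun i => by have := h.1 i; have := j.2.2 0; omega⟩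
  left_inv x := Sigma.subtype_ext (by simp) (by simp)
  right_inv j := Subtype.ext <| by
    simp only [Nat.add_sub_cancel' (j.2.2 0)]
    exact Fin.cons_self_tail j.1

lemma hasSum_incTuple_succ {p m : ℕ} {f : ℕ → ℝ} {g : ℕ → (Fin m → ℕ) → ℝ} {S : ℕ → ℝ}
    (hf : ∀ h, 0 ≤ f h) (hg : ∀ s j, 0 ≤ g s j)
    (hS : ∀ s, HasSum (fun j : IncTuple s m => g s j.1) (S s))
    (hsum : Summable fun t => f (p + t) * S (p + t + 1)) :
    HasSum (fun j : IncTuple p (m + 1) => f (j.1 0) * g (j.1 0 + 1) (Fin.tail j.1))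
      (∑' t, f (p + t) * S (p + t + 1)) := by
  rw [← (IncTuple.consEquiv p m).hasSum_iff]
  have hfib : ∀ t, HasSum (fun j : IncTuple (p + t + 1) m => f (p + t) * g (p + t + 1) j.1)
      (f (p + t) * S (p + t + 1)) := fun t => (hS _).mul_left _
  refine HasSum.sigma_of_hasSum hsum.hasSum (fun t => ?_) ?_
  · simpa [IncTuple.consEquiv] using hfib t
  · refine (summable_sigma_of_nonneg fun _ => mul_nonneg (hf _) (hg _ _)).2
      ⟨fun t => ?_, ?_⟩
    · simpa [IncTuple.consEquiv] using (hfib t).summable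
    · simpa [IncTuple.consEquiv, (hfib _).tsum_eq] using hsum

end Tuples

section Weights

variable {a : ℕ → ℝ} {q : ℝ}

def gapProd (q : ℝ) {m : ℕ} (J : Fin (m + 1) → ℕ) : ℝ :=
  ∏ i : Fin m, (1 - q ^ (J i.succ - J i.castSucc))

lemma gapProd_add_const {m : ℕ} (J : Fin (m + 1) → ℕ) (c : ℕ) :
    gapProd q (fun i => J i + c) = gapProd q J := by
  simp only [gapProd, Nat.add_sub_add_right]

lemma gapProd_cons {m : ℕ} (p : ℕ) (J : Fin (m + 1) → ℕ) :
    gapProd q (Fin.cons p J : Fin (m + 2) → ℕ) = (1 - q ^ (J 0 - p)) * gapProd q J := by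
  simp [gapProd, Fin.prod_univ_succ]

lemma gapProd_nonneg (hq0 : 0 ≤ q) (hq1 : q < 1) {m : ℕ} (J : Fin (m + 1) → ℕ) :
    0 ≤ gapProd q J :=
  prod_nonneg fun _ _ => sub_nonneg.2 (pow_le_one₀ hq0 hq1.le)

-- `Fin.cons p (j + 1)` is `(j₀ + 1, j₁ + 1, …, j_m + 1)` with `j₀ = p - 1`, so this is the
-- summand of `c_{p,m}`.
noncomputable def tupleWeight (a : ℕ → ℝ) (q : ℝ) {m : ℕ} (p : ℕ) (j : Fin m → ℕ) : ℝ :=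
  gapProd q (Fin.cons p fun i => j i + 1) / ((1 - q) ^ m * ∏ i, a (j i))

lemma tupleWeight_tail {m : ℕ} (j : Fin (m + 1) → ℕ) :
    tupleWeight a q (j 0 + 1) (Fin.tail j)
      = gapProd q j / ((1 - q) ^ m * ∏ i : Fin m, a (j i.succ)) := by
  rw [tupleWeight, ← gapProd_add_const j 1]
  congr 2
  exact Fin.cons_self_tail fun i => j i + 1

lemma tupleWeight_cons {m : ℕ} (p : ℕ) (j : Fin (m + 1) → ℕ) :
    tupleWeight a q p j
      = (1 - q ^ (j 0 + 1 - p)) / ((1 - q) * a (j 0)) * tupleWeight a q (j 0 + 1) (Fin.tail j) := by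
  rw [tupleWeight_tail, tupleWeight, gapProd_cons, gapProd_add_const, div_mul_div_comm,
    Fin.prod_univ_succ, pow_succ]
  ring

lemma tupleWeight_nonneg (ha : ∀ n, 0 < a n) (hq0 : 0 ≤ q) (hq1 : q < 1) {m : ℕ} (p : ℕ)
    (j : Fin m → ℕ) : 0 ≤ tupleWeight a q p j :=
  div_nonneg (gapProd_nonneg hq0 hq1 _) (mul_nonneg (pow_nonneg (sub_nonneg.2 hq1.le) m)
    (prod_nonneg fun _ _ => (ha _).le))

lemma hasSum_tupleWeight (ha : ∀ n, 0 < a n) (hs : Summable fun n => (a n)⁻¹) (hq0 : 0 ≤ q)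
    (hq1 : q < 1) (p m : ℕ) :
    HasSum (fun j : IncTuple p m => tupleWeight a q p j.1) (cCoeff a q p m) := by
  induction m generalizing p with
  | zero =>
    convert hasSum_fintype (fun j : IncTuple p 0 => tupleWeight a q p j.1)
    simp [tupleWeight, gapProd, cCoeff_zero]
  | succ m ih =>
    have hw : ∀ t, (1 - q ^ (p + t + 1 - p)) / ((1 - q) * a (p + t)) * cCoeff a q (p + t + 1) m
        = (1 - q ^ (t + 1)) / ((1 - q) * a (p + t)) * cCoeff a q (p + t + 1) m := fun t => by
      rw [show p + t + 1 - p = t + 1 by omega]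
    have h := hasSum_incTuple_succ (f := fun h => (1 - q ^ (h + 1 - p)) / ((1 - q) * a h))
      (fun _ => gapWeight_nonneg ha hq0 hq1 _ _) (tupleWeight_nonneg ha hq0 hq1) ih
      ((summable_cCoeff_succ ha hs hq0 hq1 p m).congr fun t => (hw t).symm)
    rw [tsum_congr hw, ← cCoeff_succ] at h
    exact h.congr_fun fun j => tupleWeight_cons p j.1

lemma hasSum_dCoeff (ha : ∀ n, 0 < a n) (hs : Summable fun n => (a n)⁻¹) (hq0 : 0 ≤ q)
    (hq1 : q < 1) (n m : ℕ) :
    HasSum (fun j : IncTuple n (m + 1) =>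
      q ^ j.1 0 / a (j.1 0) * tupleWeight a q (j.1 0 + 1) (Fin.tail j.1)) (dCoeff a q n m) :=
  hasSum_incTuple_succ (qWeight_nonneg ha hq0) (tupleWeight_nonneg ha hq0 hq1)
    (hasSum_tupleWeight ha hs hq0 hq1 · m) (summable_dCoeff ha hs hq0 hq1 n m)

end Weights

section Bridge

variable {a : ℕ → ℝ} {k : ℝ}

lemma sq_lt_one_of_mem_Ioo (hk : k ∈ Set.Ioo 0 1) : k ^ 2 < 1 :=
  pow_lt_one₀ hk.1.le hk.2 two_ne_zero

lemma gapPow_eq_gapProd (k : ℝ) (m : ℕ) (j : Fin m → ℕ) :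
    gapPow k m j = gapProd (k ^ 2) (Fin.cons 0 fun i => j i + 1 : Fin (m + 1) → ℕ) := by
  refine prod_congr rfl fun i _ => ?_
  rw [Fin.cons_succ, ← pow_mul]
  congr 4
  split_ifs with h
  · rw [show i.castSucc = 0 from Fin.ext h, Fin.cons_zero]
  · rw [show i.castSucc = Fin.succ ⟨i - 1, by omega⟩ from Fin.ext (by simp; omega), Fin.cons_succ]

lemma cC_eq_cCoeff (ha : ∀ n, 0 < a n) (hs : Summable fun n => (a n)⁻¹) (hk : k ∈ Set.Ioo 0 1)
    (m : ℕ) : cC a k m = cCoeff a (k ^ 2) 0 m := by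
  let e : IncTuple 0 m ≃ {j : Fin m → ℕ // StrictMono j} :=
    Equiv.subtypeEquivRight fun j => and_iff_left fun i => Nat.zero_le (j i)
  refine ((e.hasSum_iff).1 ((hasSum_tupleWeight ha hs (sq_nonneg k) (sq_lt_one_of_mem_Ioo hk)
    0 m).congr_fun fun j => ?_)).tsum_eq
  simp only [Function.comp_apply, e, Equiv.subtypeEquivRight_apply_coe, gapPow_eq_gapProd,
    tupleWeight]

lemma dC_eq_dCoeff (ha : ∀ n, 0 < a n) (hs : Summable fun n => (a n)⁻¹) (hk : k ∈ Set.Ioo 0 1)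
    (n m : ℕ) : dC a k n m = dCoeff a (k ^ 2) n m := by
  let e : IncTuple n (m + 1) ≃ {j : Fin (m + 1) → ℕ // StrictMono j ∧ n ≤ j 0} :=
    Equiv.subtypeEquivRight fun j => and_congr_right fun hj =>
      ⟨fun h => h 0, fun h i => h.trans (hj.monotone (Fin.zero_le i))⟩
  refine ((e.hasSum_iff).1 ((hasSum_dCoeff ha hs (sq_nonneg k)
    (sq_lt_one_of_mem_Ioo hk) n m).congr_fun fun j => ?_)).tsum_eq
  simp only [Function.comp_apply, e, Equiv.subtypeEquivRight_apply_coe]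
  rw [tupleWeight_tail, Fin.prod_univ_succ, gapProd, div_mul_div_comm]
  simp only [pow_mul]
  ring

lemma Wgt_eq_altSeries (ha : ∀ n, 0 < a n) (hs : Summable fun n => (a n)⁻¹)
    (hk : k ∈ Set.Ioo 0 1) (n : ℕ) (z : ℂ) : Wgt a k n z = altSeries (dCoeff a (k ^ 2) n) z := by
  simp only [Wgt, altSeries, dC_eq_dCoeff ha hs hk]

lemma Fgt_eq_altSeries (ha : ∀ n, 0 < a n) (hs : Summable fun n => (a n)⁻¹)
    (hk : k ∈ Set.Ioo 0 1) (z : ℂ) : Fgt a k z = altSeries (cCoeff a (k ^ 2) 0) z := by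
  rw [altSeries, (hasSum_altSeries_cCoeff ha hs (sq_nonneg k)
    (sq_lt_one_of_mem_Ioo hk) 0 z).summable.tsum_eq_zero_add]
  simp [Fgt, cC_eq_cCoeff ha hs hk, cCoeff_zero]

end Bridge

section Recurrence

variable {a : ℕ → ℝ} {k : ℝ}

lemma Wgt_recurrence (ha : ∀ n, 0 < a n) (hs : Summable fun n => (a n)⁻¹) (hk : k ∈ Set.Ioo 0 1)
    (n : ℕ) (z : ℂ) :
    (a (n + 1) : ℂ) * (Wgt a k (n + 1) z - Wgt a k (n + 2) z)
      + (k : ℂ) ^ 2 * a n * (Wgt a k (n + 1) z - Wgt a k n z) = z * Wgt a k (n + 1) z := by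
  have hq0 := sq_nonneg k
  have hq1 := sq_lt_one_of_mem_Ioo hk
  have h₁ := altSeries_dCoeff_sub ha hs hq0 hq1 n z
  have h₂ := altSeries_dCoeff_sub ha hs hq0 hq1 (n + 1) z
  have h₃ := altSeries_cCoeff_sub ha hs hq0 hq1 (n + 1) z
  simp only [Wgt_eq_altSeries ha hs hk]
  push_cast at h₁ h₂ h₃
  linear_combination h₂ - (k : ℂ) ^ 2 * h₁ - h₃

lemma Fgt_eq_Wgt (ha : ∀ n, 0 < a n) (hs : Summable fun n => (a n)⁻¹) (hk : k ∈ Set.Ioo 0 1)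
    (z : ℂ) : Fgt a k z = a 0 * (Wgt a k 0 z - Wgt a k 1 z) - z * Wgt a k 0 z := by
  have hq0 := sq_nonneg k
  have hq1 := sq_lt_one_of_mem_Ioo hk
  have h₁ := altSeries_dCoeff_sub ha hs hq0 hq1 0 z
  have h₂ := altSeries_cCoeff_sub ha hs hq0 hq1 0 z
  rw [Fgt_eq_altSeries ha hs hk, Wgt_eq_altSeries ha hs hk, Wgt_eq_altSeries ha hs hk]
  linear_combination h₂ - h₁

lemma Wgt_eq_Phi (hk : k ≠ 0) (n : ℕ) (z : ℂ) :
    Wgt a k n z = (-1) ^ n * (k : ℂ) ^ n * Phi a k n z := by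
  have hkn : (k : ℂ) ^ n ≠ 0 := pow_ne_zero n (Complex.ofReal_ne_zero.2 hk)
  rw [Phi, ← mul_assoc, mul_mul_mul_comm, ← mul_pow, mul_inv_cancel₀ hkn]
  simp

lemma Phi_initial (ha : ∀ n, 0 < a n) (hs : Summable fun n => (a n)⁻¹) (hk : k ∈ Set.Ioo 0 1)
    (z : ℂ) :
    (alph a k 0 : ℂ) * Phi a k 1 z + ((bet a k 0 : ℂ) - z) * Phi a k 0 z = Fgt a k z := by
  rw [Fgt_eq_Wgt ha hs hk, Wgt_eq_Phi hk.1.ne' 0, Wgt_eq_Phi hk.1.ne' 1, alph, bet]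
  push_cast
  ring

lemma Phi_recurrence (ha : ∀ n, 0 < a n) (hs : Summable fun n => (a n)⁻¹)
    (hk : k ∈ Set.Ioo 0 1) (n : ℕ) (z : ℂ) :
    (alph a k (n + 1) : ℂ) * Phi a k (n + 2) z + ((bet a k (n + 1) : ℂ) - z) * Phi a k (n + 1) z
      + alph a k n * Phi a k n z = 0 := by
  have h := Wgt_recurrence ha hs hk n z
  rw [Wgt_eq_Phi hk.1.ne' n, Wgt_eq_Phi hk.1.ne' (n + 1), Wgt_eq_Phi hk.1.ne' (n + 2)] at h
  have hne : (-1 : ℂ) ^ (n + 1) * (k : ℂ) ^ (n + 1) ≠ 0 :=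
    mul_ne_zero (pow_ne_zero _ (by norm_num)) (pow_ne_zero _ (Complex.ofReal_ne_zero.2 hk.1.ne'))
  refine (mul_eq_zero.1 ?_).resolve_left hne
  simp only [alph, bet]
  push_cast
  linear_combination h

end Recurrence

end JacobiSeries

/-- If `𝔉(λ) = 0` then the sequences `(P_n(λ))` and `(Φ_n(λ))` are
proportional: `Φ_n(λ) = 𝔚(λ) · P_n(λ)` for all `n`, with `𝔚 = 𝔚₀`. -/
theorem statement6
    (a : ℕ → ℝ) (ha : ∀ n, 0 < a n) (hsum : Summable fun n => 1 / a n)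
    (k : ℝ) (hk : k ∈ Set.Ioo (0 : ℝ) 1)
    (P : ℕ → ℂ → ℂ)
    (hP0 : ∀ z, P 0 z = 1)
    (hP1 : ∀ z, (alph a k 0 : ℂ) * P 1 z + ((bet a k 0 : ℂ) - z) * P 0 z = 0)
    (hPrec : ∀ n, 1 ≤ n → ∀ z,
      (alph a k n : ℂ) * P (n + 1) z + ((bet a k n : ℂ) - z) * P n z
        + (alph a k (n - 1) : ℂ) * P (n - 1) z = 0)
    (lam : ℂ) (hlam : Fgt a k lam = 0) :
    ∀ n : ℕ, Phi a k n lam = Wgt a k 0 lam * P n lam := by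
  have hs : Summable fun n => (a n)⁻¹ := by simpa only [one_div] using hsum
  have hα : ∀ n, (alph a k n : ℂ) ≠ 0 := fun n =>
    Complex.ofReal_ne_zero.2 (mul_ne_zero hk.1.ne' (ha n).ne')
  refine congrFun (JacobiSeries.eq_of_threeTerm_recurrence (x := fun n => Phi a k n lam)
    (y := fun n => Wgt a k 0 lam * P n lam) (β := fun n => (bet a k n : ℂ) - lam) hα
    ((JacobiSeries.Phi_initial ha hs hk lam).trans hlam)
    (fun n => JacobiSeries.Phi_recurrence ha hs hk n lam) ?_ ?_ ?_)
  · linear_combination Wgt a k 0 lam * hP1 lam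
  · intro n
    have h := hPrec (n + 1) (Nat.le_add_left 1 n) lam
    rw [Nat.add_sub_cancel] at h
    linear_combination Wgt a k 0 lam * h
  · simp [Phi, hP0]
end

section
/- For every q ∈ (0,1), every integer r ≥ 1, and every w ∈ ℂ with |w| < 1, one has Σ_{n=0}^∞ q^{rn} / (q^n w; q)_{r+1} = 1 / ( (1 − q^r) · (w; q)_r ), where all denominators are nonzero and the series converges absolutely. -/
/-!
The series telescopes. The two factorisations `(z;q)_{r+1} = (z;q)_r (1 - q^r z) = (1 - z) (qz;q)_r`
give `q^{rn} / (q^n w;q)_{r+1} = A n - A (n+1)` with `A n = q^{rn} / ((q^n w;q)_r (1 - q^r))`,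
and `A n → 0` geometrically since `‖(z;q)_m‖ ≥ (1 - ‖w‖)^m` whenever `‖z‖ ≤ ‖w‖ < 1` and `‖q‖ ≤ 1`.
-/

open scoped BigOperators

/-- The q-Pochhammer symbol `(w;q)_r = ∏_{i=0}^{r−1} (1 − q^i w)` (complex version). -/
noncomputable def qPC (q w : ℂ) (r : ℕ) : ℂ := ∏ i ∈ Finset.range r, (1 - q ^ i * w)

open Filter Topology

theorem hasSum_sub_succ_of_tendsto_zero {G : Type*} [AddCommGroup G] [TopologicalSpace G]
    [IsTopologicalAddGroup G] [T2Space G] {f : ℕ → G}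
    (hs : Summable fun n => f n - f (n + 1)) (hf : Tendsto f atTop (𝓝 0)) :
    HasSum (fun n => f n - f (n + 1)) (f 0) := by
  rw [hs.hasSum_iff_tendsto_nat]
  simp only [Finset.sum_range_sub']
  simpa using tendsto_const_nhds (x := f 0) |>.sub hf

lemma qPC_succ (q z : ℂ) (m : ℕ) : qPC q z (m + 1) = qPC q z m * (1 - q ^ m * z) :=
  Finset.prod_range_succ _ _

lemma qPC_succ' (q z : ℂ) (m : ℕ) : qPC q z (m + 1) = (1 - z) * qPC q (q * z) m := by
  simp only [qPC, Finset.prod_range_succ', pow_succ, pow_zero, one_mul, mul_assoc]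
  exact mul_comm _ _

lemma one_div_qPC_succ (q z : ℂ) (m : ℕ) (hz : qPC q z (m + 1) ≠ 0) (hq : 1 - q ^ m ≠ 0) :
    1 / qPC q z (m + 1) = (1 / qPC q z m - q ^ m / qPC q (q * z) m) / (1 - q ^ m) := by
  have h₁ := qPC_succ q z m
  have h₂ := qPC_succ' q z m
  have hP : qPC q z m ≠ 0 := left_ne_zero_of_mul (h₁ ▸ hz)
  have hP' : qPC q (q * z) m ≠ 0 := right_ne_zero_of_mul (h₂ ▸ hz)
  field_simp
  linear_combination q ^ m * qPC q z m * h₂ - qPC q (q * z) m * h₁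

variable {q : ℂ}

lemma norm_pow_mul_le (hq : ‖q‖ ≤ 1) (z : ℂ) (i : ℕ) : ‖q ^ i * z‖ ≤ ‖z‖ := by
  rw [norm_mul, norm_pow]
  exact mul_le_of_le_one_left (norm_nonneg _) (pow_le_one₀ (norm_nonneg _) hq)

lemma one_sub_pow_ne_zero (hq : ‖q‖ < 1) {r : ℕ} (hr : r ≠ 0) : 1 - q ^ r ≠ 0 := by
  intro h
  have := congrArg norm (sub_eq_zero.1 h)
  rw [norm_one, norm_pow] at this
  exact (pow_lt_one₀ (norm_nonneg _) hq hr).ne' this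

lemma one_sub_norm_pow_le_norm_qPC (hq : ‖q‖ ≤ 1) {z : ℂ} (hz : ‖z‖ ≤ 1) (m : ℕ) :
    (1 - ‖z‖) ^ m ≤ ‖qPC q z m‖ := by
  have hfactor (i : ℕ) : 1 - ‖z‖ ≤ ‖1 - q ^ i * z‖ :=
    calc 1 - ‖z‖ ≤ 1 - ‖q ^ i * z‖ := by gcongr; exact norm_pow_mul_le hq z i
      _ ≤ ‖1 - q ^ i * z‖ := by simpa using norm_sub_norm_le (1 : ℂ) (q ^ i * z)
  calc (1 - ‖z‖) ^ m = ∏ _i ∈ Finset.range m, (1 - ‖z‖) := by simp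
    _ ≤ ‖qPC q z m‖ := by
      rw [qPC, norm_prod]
      exact Finset.prod_le_prod (fun _ _ => sub_nonneg.2 hz) fun i _ => hfactor i

lemma qPC_ne_zero (hq : ‖q‖ ≤ 1) {z : ℂ} (hz : ‖z‖ < 1) (m : ℕ) : qPC q z m ≠ 0 :=
  norm_pos_iff.1 <| (pow_pos (sub_pos.2 hz) m).trans_le (one_sub_norm_pow_le_norm_qPC hq hz.le m)

variable {w : ℂ}

lemma norm_pow_mul_div_qPC_le (hq : ‖q‖ ≤ 1) (hw : ‖w‖ < 1) (r m n : ℕ) :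
    ‖q ^ (r * n) / qPC q (q ^ n * w) m‖ ≤ (‖q‖ ^ r) ^ n / (1 - ‖w‖) ^ m := by
  rw [norm_div, norm_pow, pow_mul]
  gcongr
  calc (1 - ‖w‖) ^ m ≤ (1 - ‖q ^ n * w‖) ^ m := by
        gcongr; exact norm_pow_mul_le hq w n
    _ ≤ _ := one_sub_norm_pow_le_norm_qPC hq ((norm_pow_mul_le hq w n).trans hw.le) m

lemma summable_norm_pow_mul_div_qPC (hq : ‖q‖ < 1) (hw : ‖w‖ < 1) {r : ℕ} (hr : r ≠ 0) (m : ℕ) :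
    Summable fun n : ℕ => ‖q ^ (r * n) / qPC q (q ^ n * w) m‖ :=
  .of_nonneg_of_le (fun _ => norm_nonneg _) (norm_pow_mul_div_qPC_le hq.le hw r m)
    ((summable_geometric_of_lt_one (by positivity) (pow_lt_one₀ (norm_nonneg _) hq hr)).div_const _)

theorem hasSum_pow_mul_div_qPC_succ (hq : ‖q‖ < 1) (hw : ‖w‖ < 1) {r : ℕ} (hr : r ≠ 0) :
    HasSum (fun n : ℕ => q ^ (r * n) / qPC q (q ^ n * w) (r + 1))
      (1 / ((1 - q ^ r) * qPC q w r)) := by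
  set A : ℕ → ℂ := fun n => q ^ (r * n) / qPC q (q ^ n * w) r / (1 - q ^ r)
  have htele : ∀ n : ℕ, q ^ (r * n) / qPC q (q ^ n * w) (r + 1) = A n - A (n + 1) := by
    intro n
    have hw_n := (norm_pow_mul_le hq.le w n).trans_lt hw
    rw [← mul_one_div, one_div_qPC_succ _ _ _ (qPC_ne_zero hq.le hw_n _)
      (one_sub_pow_ne_zero hq hr), ← mul_assoc, ← pow_succ']
    simp only [A, mul_add, mul_one, pow_add]
    ring
  have hA : Tendsto A atTop (𝓝 0) := by
    simpa [zero_div] using (tendsto_zero_iff_norm_tendsto_zero.2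
      (summable_norm_pow_mul_div_qPC hq hw hr r).tendsto_atTop_zero).div_const (1 - q ^ r)
  have hA0 : A 0 = 1 / ((1 - q ^ r) * qPC q w r) := by simp [A, div_div, mul_comm]
  rw [← hA0, funext htele]
  refine hasSum_sub_succ_of_tendsto_zero ?_ hA
  simpa only [← htele] using (summable_norm_pow_mul_div_qPC hq hw hr (r + 1)).of_norm

/-- For `q ∈ (0,1)`, `r ≥ 1`, `|w| < 1`:
`Σ_{n=0}^∞ q^{rn}/(q^n w;q)_{r+1} = 1/((1 − q^r)(w;q)_r)`, all denominators are
nonzero and the series converges absolutely. -/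
theorem statement10 (q : ℝ) (hq : q ∈ Set.Ioo (0 : ℝ) 1) (r : ℕ) (hr : 1 ≤ r)
    (w : ℂ) (hw : ‖w‖ < 1) :
    (∀ n : ℕ, qPC (q : ℂ) ((q : ℂ) ^ n * w) (r + 1) ≠ 0) ∧
    (1 - (q : ℂ) ^ r ≠ 0 ∧ qPC (q : ℂ) w r ≠ 0) ∧
    Summable (fun n : ℕ => ‖(q : ℂ) ^ (r * n) / qPC (q : ℂ) ((q : ℂ) ^ n * w) (r + 1)‖) ∧
    ∑' n : ℕ, (q : ℂ) ^ (r * n) / qPC (q : ℂ) ((q : ℂ) ^ n * w) (r + 1)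
      = 1 / ((1 - (q : ℂ) ^ r) * qPC (q : ℂ) w r) := by
  have hq' : ‖(q : ℂ)‖ < 1 := by rw [Complex.norm_real, Real.norm_of_nonneg hq.1.le]; exact hq.2
  have hr' : r ≠ 0 := by omega
  refine ⟨fun n => qPC_ne_zero hq'.le ((norm_pow_mul_le hq'.le w n).trans_lt hw) _,
    ⟨one_sub_pow_ne_zero hq' hr', qPC_ne_zero hq'.le hw r⟩,
    summable_norm_pow_mul_div_qPC hq' hw hr' _, ?_⟩
  exact (hasSum_pow_mul_div_qPC_succ hq' hw hr').tsum_eq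
end

section
/- For every q ∈ (0,1), every m ∈ ℕ, and all positive reals c_0, c_1, …, c_m: (1/(1−q)^m) · Σ over all (m+1)-tuples of natural numbers 0 ≤ j_0 ≤ j_1 ≤ … ≤ j_m < ∞ of q^{c_0 j_0 + c_1 j_1 + … + c_m j_m} (1−q^{j_1−j_0})(1−q^{j_2−j_1})⋯(1−q^{j_m−j_{m−1}}) = q^{c_1 + 2c_2 + … + m·c_m} / [ (q^{c_0+c_1+…+c_m};q)_1 (q^{c_1+c_2+…+c_m};q)_2 (q^{c_2+…+c_m};q)_2 ⋯ (q^{c_m};q)_2 ], with the series converging absolutely. -/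
open scoped BigOperators

/-- The q-Pochhammer symbol `(x;q)_r = ∏_{i=0}^{r−1} (1 − q^i x)` (real version). -/
noncomputable def qPR (q x : ℝ) (r : ℕ) : ℝ := ∏ i ∈ Finset.range r, (1 - q ^ i * x)

/-- The summand of the left-hand side of Statement 13, for a monotone tuple
`j_0 ≤ j_1 ≤ … ≤ j_m`:
`q^{c_0 j_0 + … + c_m j_m} (1−q^{j_1−j_0})(1−q^{j_2−j_1})⋯(1−q^{j_m−j_{m−1}})`. -/
noncomputable def lhsTerm13 (q : ℝ) (m : ℕ) (c : ℕ → ℝ) (j : Fin (m + 1) → ℕ) : ℝ :=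
  q ^ (∑ i : Fin (m + 1), c (i : ℕ) * (j i : ℝ)) *
    ∏ i : Fin m, (1 - q ^ (j i.succ - j i.castSucc))

/-!
Writing `j_i = k_0 + ⋯ + k_i` identifies monotone tuples with arbitrary tuples `k ∈ ℕ^{m+1}`
and turns the summand into `Q_0^{k_0} ∏_{i=1}^m Q_i^{k_i} (1 - q^{k_i})`, where
`Q_i = q^{c_i + ⋯ + c_m}` (`tailPow`). The series is therefore a product of one-dimensional
series: a geometric one with sum `1/(1 - Q_0)`, and `m` series with sum
`∑_k Q^k (1 - q^k) = 1/(1 - Q) - 1/(1 - qQ) = Q (1 - q) / ((1 - Q)(1 - qQ))`.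
-/

open Finset

theorem hasSum_pi_prod_of_nonneg {α : Type*} {n : ℕ} {f : Fin n → α → ℝ} {a : Fin n → ℝ}
    (hf₀ : ∀ i x, 0 ≤ f i x) (hf : ∀ i, HasSum (f i) (a i)) :
    HasSum (fun k : Fin n → α => ∏ i, f i (k i)) (∏ i, a i) := by
  induction n with
  | zero => simp
  | succ n ih =>
    set g : (Fin n → α) → ℝ := fun k => ∏ i : Fin n, f i.succ (k i)
    have hg : HasSum g (∏ i : Fin n, a i.succ) := ih (fun i => hf₀ i.succ) (fun i => hf i.succ)
    have hpair :
        HasSum (fun p : α × (Fin n → α) => f 0 p.1 * g p.2) (a 0 * ∏ i : Fin n, a i.succ) :=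
      (hf 0).mul hg <| (hf 0).summable.mul_of_nonneg hg.summable (hf₀ 0)
        fun k => prod_nonneg fun i _ => hf₀ _ _
    rw [Fin.prod_univ_succ, ← (Fin.consEquiv fun _ => α).hasSum_iff]
    simpa [Function.comp_def, Fin.prod_univ_succ, Fin.consEquiv] using hpair

theorem hasSum_pow_mul_one_sub_pow {r q : ℝ} (hr₀ : 0 ≤ r) (hr₁ : r < 1) (hq₀ : 0 ≤ q)
    (hq₁ : q ≤ 1) :
    HasSum (fun x : ℕ => r ^ x * (1 - q ^ x)) (r * (1 - q) / ((1 - r) * (1 - q * r))) := by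
  have hqr₁ : q * r < 1 := mul_lt_one_of_nonneg_of_lt_one_right hq₁ hr₀ hr₁
  have hsum : r * (1 - q) / ((1 - r) * (1 - q * r)) = (1 - r)⁻¹ - (1 - q * r)⁻¹ := by
    rw [inv_sub_inv (sub_ne_zero.2 hr₁.ne') (sub_ne_zero.2 hqr₁.ne')]
    ring
  rw [hsum, show (fun x : ℕ => r ^ x * (1 - q ^ x)) = fun x => r ^ x - (q * r) ^ x from
    funext fun x => by ring]
  exact (hasSum_geometric_of_lt_one hr₀ hr₁).sub
    (hasSum_geometric_of_lt_one (mul_nonneg hq₀ hr₀) hqr₁)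

theorem sum_range_natCast_mul_eq_sum_Icc_sum_Icc {R : Type*} [CommSemiring R] (c : ℕ → R)
    (m : ℕ) : ∑ i ∈ range (m + 1), (i : R) * c i = ∑ i ∈ Icc 1 m, ∑ n ∈ Icc i m, c n := by
  induction m with
  | zero => simp
  | succ m ih =>
    have htop : ∀ i ∈ Icc 1 m, ∑ n ∈ Icc i (m + 1), c n = ∑ n ∈ Icc i m, c n + c (m + 1) :=
      fun i hi => sum_Icc_succ_top (by grind) c
    rw [sum_range_succ, ih, sum_Icc_succ_top (by omega), sum_congr rfl htop, sum_add_distrib,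
      Icc_self, sum_singleton, sum_const, Nat.card_Icc]
    push_cast
    ring

theorem prod_Icc_one_eq_prod_fin {M : Type*} [CommMonoid M] (f : ℕ → M) (m : ℕ) :
    ∏ i ∈ Icc 1 m, f i = ∏ i : Fin m, f (i + 1) := by
  rw [Fin.prod_univ_eq_prod_range (fun i => f (i + 1)), range_eq_Ico, prod_Ico_add',
    zero_add, Ico_add_one_right_eq_Icc]

variable {m : ℕ}

def cumulativeSum (k : Fin (m + 1) → ℕ) (i : Fin (m + 1)) : ℕ := ∑ t ∈ Iic i, k t

theorem monotone_cumulativeSum (k : Fin (m + 1) → ℕ) : Monotone (cumulativeSum k) :=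
  fun _ _ hij => sum_le_sum_of_subset (Iic_subset_Iic.2 hij)

theorem cumulativeSum_zero (k : Fin (m + 1) → ℕ) : cumulativeSum k 0 = k 0 := by
  rw [cumulativeSum, ← bot_eq_zero, Iic_bot, sum_singleton]

theorem cumulativeSum_succ (k : Fin (m + 1) → ℕ) (i : Fin m) :
    cumulativeSum k i.succ = cumulativeSum k i.castSucc + k i.succ := by
  have : Iic i.succ = insert i.succ (Iic i.castSucc) := by
    ext t
    simp only [mem_Iic, mem_insert, Fin.le_def, Fin.ext_iff, Fin.val_succ, Fin.val_castSucc]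
    omega
  rw [cumulativeSum, this, sum_insert (by simp [Fin.le_def]), add_comm]
  rfl

def successiveDiff (j : Fin (m + 1) → ℕ) : Fin (m + 1) → ℕ :=
  Fin.cons (j 0) fun i => j i.succ - j i.castSucc

def cumulativeSumEquiv (m : ℕ) : (Fin (m + 1) → ℕ) ≃ {j : Fin (m + 1) → ℕ // Monotone j} where
  toFun k := ⟨cumulativeSum k, monotone_cumulativeSum k⟩
  invFun j := successiveDiff j.1
  left_inv k := by
    funext i
    cases i using Fin.cases with
    | zero => simp [successiveDiff, cumulativeSum_zero]
    | succ i => simp [successiveDiff, cumulativeSum_succ]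
  right_inv j := by
    refine Subtype.ext (funext fun i => ?_)
    induction i using Fin.induction with
    | zero => simp [successiveDiff, cumulativeSum_zero]
    | succ i ih =>
      simp only at ih ⊢
      rw [cumulativeSum_succ, ih, successiveDiff, Fin.cons_succ,
        Nat.add_sub_cancel' (j.2 (Fin.castSucc_le_succ i))]

theorem sum_mul_cumulativeSum {R : Type*} [CommSemiring R] (w : Fin (m + 1) → R)
    (k : Fin (m + 1) → ℕ) :
    ∑ i, w i * cumulativeSum k i = ∑ t, (∑ i ∈ Ici t, w i) * k t := by
  simp_rw [cumulativeSum, Nat.cast_sum, mul_sum, sum_mul]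
  exact sum_comm' (by simp)

theorem sum_Ici_fin_eq_sum_Icc {M : Type*} [AddCommMonoid M] (c : ℕ → M) (t : Fin (m + 1)) :
    ∑ i ∈ Ici t, c i = ∑ n ∈ Icc (t : ℕ) m, c n := by
  rw [← Ico_add_one_right_eq_Icc, ← Fin.map_valEmbedding_Ici, sum_map]
  rfl

noncomputable def tailPow (q : ℝ) (m : ℕ) (c : ℕ → ℝ) (i : ℕ) : ℝ := q ^ ∑ t ∈ Icc i m, c t

section

variable {q : ℝ} {c : ℕ → ℝ}

theorem tailPow_nonneg (hq : 0 < q) (i : ℕ) : 0 ≤ tailPow q m c i :=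
  Real.rpow_nonneg hq.le _

theorem tailPow_lt_one (hq₀ : 0 < q) (hq₁ : q < 1) (hc : ∀ i ≤ m, 0 < c i) {i : ℕ}
    (hi : i ≤ m) : tailPow q m c i < 1 :=
  Real.rpow_lt_one hq₀.le hq₁ <|
    sum_pos (fun t ht => hc t (mem_Icc.1 ht).2) ⟨i, mem_Icc.2 ⟨le_rfl, hi⟩⟩

theorem lhsTerm13_cumulativeSum (hq : 0 < q) (k : Fin (m + 1) → ℕ) :
    lhsTerm13 q m c (cumulativeSum k) = tailPow q m c 0 ^ k 0 *
      ∏ i : Fin m, tailPow q m c (i + 1) ^ k i.succ * (1 - q ^ k i.succ) := by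
  have hexp : q ^ ∑ i : Fin (m + 1), c i * (cumulativeSum k i : ℝ) =
      ∏ t : Fin (m + 1), tailPow q m c t ^ k t := by
    rw [sum_mul_cumulativeSum, Real.rpow_sum_of_pos hq]
    refine prod_congr rfl fun t _ => ?_
    rw [sum_Ici_fin_eq_sum_Icc, Real.rpow_mul hq.le, Real.rpow_natCast]
    rfl
  have hdiff (i : Fin m) : cumulativeSum k i.succ - cumulativeSum k i.castSucc = k i.succ := by
    rw [cumulativeSum_succ]
    omega
  rw [lhsTerm13, hexp, Fin.prod_univ_succ, prod_mul_distrib]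
  simp only [hdiff, Fin.val_zero, Fin.val_succ, mul_assoc]

theorem hasSum_lhsTerm13 (hq₀ : 0 < q) (hq₁ : q < 1) (hc : ∀ i ≤ m, 0 < c i) :
    HasSum (fun j : {j : Fin (m + 1) → ℕ // Monotone j} => lhsTerm13 q m c j.1)
      ((1 - tailPow q m c 0)⁻¹ * ∏ i : Fin m, tailPow q m c (i + 1) * (1 - q) /
        ((1 - tailPow q m c (i + 1)) * (1 - q * tailPow q m c (i + 1)))) := by
  have hQ₀ (i : ℕ) := tailPow_nonneg (m := m) (c := c) hq₀ i
  have hQ₁ {i : ℕ} (hi : i ≤ m) := tailPow_lt_one hq₀ hq₁ hc hi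
  rw [← (cumulativeSumEquiv m).hasSum_iff]
  have := hasSum_pi_prod_of_nonneg
    (f := Fin.cons (fun x => tailPow q m c 0 ^ x)
      fun i x => tailPow q m c (i + 1) ^ x * (1 - q ^ x))
    (a := Fin.cons (1 - tailPow q m c 0)⁻¹ fun i => tailPow q m c (i + 1) * (1 - q) /
        ((1 - tailPow q m c (i + 1)) * (1 - q * tailPow q m c (i + 1))))
    (fun i x => by
      cases i using Fin.cases with
      | zero => simpa using pow_nonneg (hQ₀ 0) x
      | succ i =>
        simpa using mul_nonneg (pow_nonneg (hQ₀ _) x) (sub_nonneg.2 (pow_le_one₀ hq₀.le hq₁.le)))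
    (fun i => by
      cases i using Fin.cases with
      | zero => simpa using hasSum_geometric_of_lt_one (hQ₀ 0) (hQ₁ m.zero_le)
      | succ i => simpa using hasSum_pow_mul_one_sub_pow (hQ₀ _) (hQ₁ i.isLt) hq₀.le hq₁.le)
  convert this using 1
  · funext k
    simp [cumulativeSumEquiv, lhsTerm13_cumulativeSum hq₀, Fin.prod_univ_succ]
  · simp [Fin.prod_univ_succ]

end

/-- For `q ∈ (0,1)`, `m ∈ ℕ`, positive reals `c_0, …, c_m`:
`(1/(1−q)^m) Σ_{0 ≤ j_0 ≤ … ≤ j_m} q^{c_0 j_0+…+c_m j_m} (1−q^{j_1−j_0})⋯(1−q^{j_m−j_{m−1}})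
 = q^{c_1+2c_2+…+m c_m} / [(q^{c_0+…+c_m};q)_1 (q^{c_1+…+c_m};q)_2 ⋯ (q^{c_m};q)_2]`,
with the series converging absolutely. -/
theorem statement13 (q : ℝ) (hq : q ∈ Set.Ioo (0 : ℝ) 1) (m : ℕ)
    (c : ℕ → ℝ) (hc : ∀ i, i ≤ m → 0 < c i) :
    Summable (fun j : {j : Fin (m + 1) → ℕ // Monotone j} => lhsTerm13 q m c j.1) ∧
    (1 / (1 - q) ^ m) * ∑' j : {j : Fin (m + 1) → ℕ // Monotone j}, lhsTerm13 q m c j.1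
      = q ^ (∑ i ∈ Finset.range (m + 1), (i : ℝ) * c i) /
          (qPR q (q ^ (∑ t ∈ Finset.Icc 0 m, c t)) 1 *
            ∏ i ∈ Finset.Icc 1 m, qPR q (q ^ (∑ t ∈ Finset.Icc i m, c t)) 2) := by
  obtain ⟨hq₀, hq₁⟩ := hq
  have hsum := hasSum_lhsTerm13 hq₀ hq₁ hc
  refine ⟨hsum.summable, ?_⟩
  have hfold (i : ℕ) : q ^ ∑ t ∈ Icc i m, c t = tailPow q m c i := rfl
  rw [hsum.tsum_eq, sum_range_natCast_mul_eq_sum_Icc_sum_Icc, Real.rpow_sum_of_pos hq₀]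
  simp only [qPR, prod_range_succ, prod_range_zero, pow_zero, pow_one, one_mul, hfold]
  rw [prod_Icc_one_eq_prod_fin, prod_Icc_one_eq_prod_fin, prod_div_distrib, prod_mul_distrib,
    prod_const, card_univ, Fintype.card_fin]
  have hQ {i : ℕ} (hi : i ≤ m) := tailPow_lt_one hq₀ hq₁ hc hi
  have hden : ∏ i : Fin m, (1 - tailPow q m c (i + 1)) * (1 - q * tailPow q m c (i + 1)) ≠ 0 :=
    prod_ne_zero_iff.2 fun i _ => mul_ne_zero (sub_ne_zero.2 (hQ i.isLt).ne')
      (sub_ne_zero.2 (mul_lt_one_of_nonneg_of_lt_one_left hq₀.le hq₁ (hQ i.isLt).le).ne')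
  field_simp [sub_ne_zero.2 (hQ m.zero_le).ne', sub_ne_zero.2 hq₁.ne']
end
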